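/- arXiv:1409.1075 — 6 statements merged into one kernel-verified Lean document; each statement's English description precedes it below -/
import Mathlib

section
/- For a > 0, c < 0, and x > 0, define Δ_c(x) = ψ(a,c,x)² − ψ(a,c−1,x)·ψ(a,c+1,x). Then Δ_c(x) > (a/(c(1+a−c)))·ψ(a,c,x)². -/
open MeasureTheory Real

noncomputable def tricomiPsi (a c x : ℝ) : ℝ :=
  (1 / Real.Gamma a) * ∫ t in Set.Ioi (0:ℝ), Real.exp (-x * t) * t ^ (a - 1) * (1 + t) ^ (c - a - 1)

open Set Filter Topology

namespace TuranAux

noncomputable def phi (x p q t : ℝ) : ℝ := Real.exp (-x * t) * t ^ p * (1 + t) ^ q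

lemma phi_pos {x p q t : ℝ} (ht : 0 < t) : 0 < phi x p q t := by
  have h1 : (0:ℝ) < 1 + t := by linarith
  exact mul_pos (mul_pos (Real.exp_pos _) (Real.rpow_pos_of_pos ht _))
    (Real.rpow_pos_of_pos h1 _)

lemma phi_continuousOn (x p q : ℝ) : ContinuousOn (phi x p q) (Ioi (0:ℝ)) := by
  intro t ht
  have h1 : (0:ℝ) < 1 + t := by have := ht.out; linarith
  apply ContinuousWithinAt.mul
  · apply ContinuousWithinAt.mul
    · exact ((Real.continuous_exp.comp (continuous_const.mul continuous_id)).continuousAt).continuousWithinAt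
    · exact ((Real.continuousAt_rpow_const t p (Or.inl (ne_of_gt ht.out)))).continuousWithinAt
  · exact (ContinuousAt.comp (Real.continuousAt_rpow_const _ q (Or.inl (ne_of_gt h1)))
      (continuous_const.add continuous_id).continuousAt).continuousWithinAt

lemma base_integrable {x s : ℝ} (hx : 0 < x) (hs : -1 < s) :
    IntegrableOn (fun t : ℝ => Real.exp (-x * t) * t ^ s) (Ioi (0:ℝ)) := by
  have h0 : IntegrableOn (fun t : ℝ => Real.exp (-t) * t ^ s) (Ioi 0) := by
    simpa using Real.GammaIntegral_convergent (s := s + 1) (by linarith)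
  have h1 : IntegrableOn (fun t : ℝ => Real.exp (-(x * t)) * (x * t) ^ s) (Ioi 0) := by
    have := (integrableOn_Ioi_comp_mul_left_iff
      (fun t : ℝ => Real.exp (-t) * t ^ s) 0 hx).2 (by simpa using h0)
    simpa using this
  have h2 : IntegrableOn (fun t : ℝ => x ^ s * (Real.exp (-(x * t)) * t ^ s)) (Ioi 0) := by
    apply h1.congr_fun ?_ measurableSet_Ioi
    intro t ht
    show Real.exp (-(x*t)) * (x*t)^s = x ^ s * (Real.exp (-(x*t)) * t^s)
    rw [Real.mul_rpow hx.le (le_of_lt ht.out)]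
    ring
  have hxs : (x:ℝ) ^ s ≠ 0 := (Real.rpow_pos_of_pos hx s).ne'
  have h3 : IntegrableOn (fun t : ℝ => (x ^ s)⁻¹ * (x ^ s * (Real.exp (-(x * t)) * t ^ s))) (Ioi 0) :=
    h2.const_mul _
  apply h3.congr_fun ?_ measurableSet_Ioi
  intro t _
  show (x ^ s)⁻¹ * (x ^ s * (Real.exp (-(x*t)) * t^s)) = Real.exp (-x*t) * t^s
  rw [neg_mul]
  field_simp

lemma one_add_rpow_le {q t : ℝ} (hq : 0 ≤ q) (ht : 0 < t) :
    (1 + t) ^ q ≤ 2 ^ q * (1 + t ^ q) := by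
  rcases le_total t 1 with h | h
  · have h1 : (1 + t) ^ q ≤ 2 ^ q := by
      apply Real.rpow_le_rpow (by linarith) (by linarith) hq
    have h2 : (0:ℝ) ≤ t ^ q := (Real.rpow_pos_of_pos ht q).le
    nlinarith [Real.rpow_pos_of_pos (show (0:ℝ) < 2 by norm_num) q]
  · have h1 : (1 + t) ^ q ≤ (2 * t) ^ q := by
      apply Real.rpow_le_rpow (by linarith) (by linarith) hq
    have h2 : (2 * t) ^ q = 2 ^ q * t ^ q := Real.mul_rpow (by norm_num) ht.le
    have h3 : (0:ℝ) < 2 ^ q := Real.rpow_pos_of_pos (by norm_num) q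
    nlinarith [h3]

lemma phi_integrable {x p q : ℝ} (hx : 0 < x) (hp : -1 < p) :
    IntegrableOn (phi x p q) (Ioi (0:ℝ)) := by
  set Q := max q 0 with hQ
  have hQ0 : 0 ≤ Q := le_max_right _ _
  have hbig : IntegrableOn
      (fun t : ℝ => 2 ^ Q * (Real.exp (-x*t) * t ^ p + Real.exp (-x*t) * t ^ (p + Q))) (Ioi 0) :=
    ((base_integrable hx hp).add (base_integrable hx (by linarith))).const_mul _
  apply hbig.mono' ((phi_continuousOn x p q).aestronglyMeasurable measurableSet_Ioi)
  filter_upwards [ae_restrict_mem measurableSet_Ioi] with t ht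
  have ht0 : (0:ℝ) < t := ht
  have h1t : (0:ℝ) < 1 + t := by linarith
  have hphi : 0 < phi x p q t := phi_pos ht0
  rw [Real.norm_of_nonneg hphi.le]
  have step1 : (1 + t) ^ q ≤ (1 + t) ^ Q :=
    Real.rpow_le_rpow_of_exponent_le (by linarith) (le_max_left _ _)
  have step2 : (1 + t) ^ Q ≤ 2 ^ Q * (1 + t ^ Q) := one_add_rpow_le hQ0 ht0
  have hA : 0 < Real.exp (-x*t) * t ^ p := mul_pos (Real.exp_pos _) (Real.rpow_pos_of_pos ht0 _)
  have key : phi x p q t ≤ (Real.exp (-x*t) * t ^ p) * (2 ^ Q * (1 + t ^ Q)) := by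
    show Real.exp (-x*t) * t ^ p * (1+t) ^ q ≤ (Real.exp (-x*t) * t ^ p) * (2 ^ Q * (1 + t ^ Q))
    calc Real.exp (-x * t) * t ^ p * (1+t) ^ q
        ≤ Real.exp (-x * t) * t ^ p * ((1+t) ^ Q) := by
          apply mul_le_mul_of_nonneg_left (step1) hA.le
      _ ≤ (Real.exp (-x*t) * t ^ p) * (2 ^ Q * (1 + t ^ Q)) :=
          mul_le_mul_of_nonneg_left step2 hA.le
  calc phi x p q t ≤ (Real.exp (-x*t) * t ^ p) * (2 ^ Q * (1 + t ^ Q)) := key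
    _ = 2 ^ Q * (Real.exp (-x*t) * t ^ p + Real.exp (-x*t) * (t ^ p * t ^ Q)) := by ring
    _ = 2 ^ Q * (Real.exp (-x*t) * t ^ p + Real.exp (-x*t) * t ^ (p + Q)) := by
        rw [← Real.rpow_add ht0]

noncomputable def J (x p q : ℝ) : ℝ := ∫ t in Ioi (0:ℝ), phi x p q t

lemma J_pos {x p q : ℝ} (hx : 0 < x) (hp : -1 < p) : 0 < J x p q := by
  rw [J, setIntegral_pos_iff_support_of_nonneg_ae ?h1 (phi_integrable hx hp)]
  · apply lt_of_lt_of_le ?_ (measure_mono (show Ioi (0:ℝ) ⊆ _ from ?_))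
    · show (0:ENNReal) < volume (Ioi (0:ℝ))
      simp
    · intro t ht
      exact ⟨(phi_pos ht).ne', ht⟩
  · filter_upwards [ae_restrict_mem measurableSet_Ioi] with t ht
    exact (phi_pos ht).le
lemma J_step {x p q : ℝ} (hx : 0 < x) (hp : -1 < p) :
    J x p (q + 1) = J x p q + J x (p+1) q := by
  have h1 : J x p (q+1) = ∫ t in Ioi (0:ℝ), (phi x p q t + phi x (p+1) q t) := by
    apply setIntegral_congr_fun measurableSet_Ioi
    intro t ht
    have ht0 : (0:ℝ) < t := ht
    have h1t : (1:ℝ) + t ≠ 0 := by positivity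
    show phi x p (q+1) t = phi x p q t + phi x (p+1) q t
    unfold phi
    rw [Real.rpow_add_one h1t, Real.rpow_add_one (ne_of_gt ht0)]
    ring
  rw [h1, integral_add (phi_integrable hx hp) (phi_integrable hx (by linarith))]
  rfl

lemma phi_tendsto {x p q : ℝ} (hx : 0 < x) :
    Tendsto (phi x p q) atTop (𝓝 0) := by
  set Q := max q 0 with hQdef
  have hQ0 : 0 ≤ Q := le_max_right _ _
  have hg : Tendsto (fun t : ℝ => 2 ^ Q * (t ^ p * Real.exp (-x * t) + t ^ (p+Q) * Real.exp (-x * t)))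
      atTop (𝓝 0) := by
    have h1 := tendsto_rpow_mul_exp_neg_mul_atTop_nhds_zero p x hx
    have h2 := tendsto_rpow_mul_exp_neg_mul_atTop_nhds_zero (p+Q) x hx
    have := (h1.add h2).const_mul ((2:ℝ) ^ Q)
    simpa using this
  apply squeeze_zero' ?_ ?_ hg
  · filter_upwards [eventually_gt_atTop (0:ℝ)] with t ht
    exact (phi_pos ht).le
  · filter_upwards [eventually_gt_atTop (0:ℝ)] with t ht
    have h1t : (0:ℝ) < 1 + t := by linarith
    have hA : 0 < Real.exp (-x*t) * t ^ p := mul_pos (Real.exp_pos _) (Real.rpow_pos_of_pos ht _)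
    have step1 : (1 + t) ^ q ≤ (1 + t) ^ Q :=
      Real.rpow_le_rpow_of_exponent_le (by linarith) (le_max_left _ _)
    have step2 : (1 + t) ^ Q ≤ 2 ^ Q * (1 + t ^ Q) := one_add_rpow_le hQ0 ht
    have key : phi x p q t ≤ (Real.exp (-x*t) * t ^ p) * (2 ^ Q * (1 + t ^ Q)) := by
      unfold phi
      calc Real.exp (-x * t) * t ^ p * (1+t) ^ q
          ≤ Real.exp (-x * t) * t ^ p * ((1+t) ^ Q) := mul_le_mul_of_nonneg_left step1 hA.le
        _ ≤ _ := mul_le_mul_of_nonneg_left step2 hA.le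
    calc phi x p q t ≤ (Real.exp (-x*t) * t ^ p) * (2 ^ Q * (1 + t ^ Q)) := key
      _ = 2 ^ Q * (t ^ p * Real.exp (-x*t) + Real.exp (-x*t) * (t ^ p * t ^ Q)) := by ring
      _ = 2 ^ Q * (t ^ p * Real.exp (-x*t) + t ^ (p+Q) * Real.exp (-x*t)) := by
          rw [← Real.rpow_add ht]; ring

lemma J_ibp {x p q : ℝ} (hx : 0 < x) (hp : 0 < p) :
    x * J x p q = p * J x (p-1) q + q * J x p (q-1) := by
  have hint : IntegrableOn
      (fun t : ℝ => p * phi x (p-1) q t + q * phi x p (q-1) t - x * phi x p q t) (Ioi 0) :=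
    (((phi_integrable hx (by linarith : (-1:ℝ) < p-1)).const_mul p).add
      ((phi_integrable hx (by linarith : (-1:ℝ) < p)).const_mul q)).sub
      ((phi_integrable hx (by linarith : (-1:ℝ) < p)).const_mul x)
  have hderiv : ∀ t ∈ Ioi (0:ℝ), HasDerivAt (phi x p q)
      (p * phi x (p-1) q t + q * phi x p (q-1) t - x * phi x p q t) t := by
    intro t ht
    have ht0 : (0:ℝ) < t := ht
    have h1t : (0:ℝ) < 1 + t := by linarith
    have he : HasDerivAt (fun t : ℝ => Real.exp (-x * t)) (Real.exp (-x*t) * (-x * 1)) t :=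
      ((hasDerivAt_id t).const_mul (-x)).exp
    have hp1 : HasDerivAt (fun t : ℝ => t ^ p) (p * t ^ (p-1)) t :=
      Real.hasDerivAt_rpow_const (Or.inl (ne_of_gt ht0))
    have hq1 : HasDerivAt (fun t : ℝ => (1 + t) ^ q) (q * (1+t) ^ (q-1) * 1) t := by
      have inner : HasDerivAt (fun t : ℝ => 1 + t) 1 t := (hasDerivAt_id t).const_add 1
      exact (Real.hasDerivAt_rpow_const (p := q) (Or.inl (ne_of_gt h1t))).comp t inner
    have := (he.mul hp1).mul hq1
    refine HasDerivAt.congr_deriv this ?_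
    unfold phi
    simp only [Pi.mul_apply]
    ring
  have hF0 : phi x p q 0 = 0 := by
    unfold phi
    rw [Real.zero_rpow (ne_of_gt hp)]
    ring
  have hcont : ContinuousWithinAt (phi x p q) (Ici 0) 0 := by
    apply ContinuousWithinAt.mul
    apply ContinuousWithinAt.mul
    · exact ((Real.continuous_exp.comp (continuous_const.mul continuous_id)).continuousAt).continuousWithinAt
    · exact (Real.continuousAt_rpow_const 0 p (Or.inr hp.le)).continuousWithinAt
    · exact (ContinuousAt.comp (Real.continuousAt_rpow_const _ q (by norm_num))
        (continuous_const.add continuous_id).continuousAt).continuousWithinAt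
  have key := integral_Ioi_of_hasDerivAt_of_tendsto hcont hderiv hint (phi_tendsto hx)
  rw [hF0, sub_zero] at key
  have i1 : IntegrableOn (fun t : ℝ => p * phi x (p-1) q t) (Ioi 0) :=
    (phi_integrable hx (by linarith : (-1:ℝ) < p-1)).const_mul p
  have i2 : IntegrableOn (fun t : ℝ => q * phi x p (q-1) t) (Ioi 0) :=
    (phi_integrable hx (by linarith : (-1:ℝ) < p)).const_mul q
  have i3 : IntegrableOn (fun t : ℝ => x * phi x p q t) (Ioi 0) :=
    (phi_integrable hx (by linarith : (-1:ℝ) < p)).const_mul x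
  have i12 : IntegrableOn (fun t : ℝ => p * phi x (p-1) q t + q * phi x p (q-1) t) (Ioi 0) :=
    i1.add i2
  have expand : ∫ t in Ioi (0:ℝ),
      (p * phi x (p-1) q t + q * phi x p (q-1) t - x * phi x p q t)
      = p * J x (p-1) q + q * J x p (q-1) - x * J x p q := by
    rw [integral_sub i12 i3, integral_add i1 i2,
      integral_const_mul, integral_const_mul, integral_const_mul]
    rfl
  rw [expand] at key
  linarith [key]

lemma J_cs {x p q : ℝ} (hx : 0 < x) (hp : -1 < p) :
    (J x (p+1) q)^2 < J x p q * J x (p+2) q := by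
  have hJp : 0 < J x p q := J_pos hx hp
  have hJ1 : 0 < J x (p+1) q := J_pos hx (by linarith)
  set r : ℝ := J x (p+1) q / J x p q with hr
  have hint2 : IntegrableOn (phi x (p+2) q) (Ioi (0:ℝ)) := by
    have := phi_integrable (p := p + 2) (q := q) hx (by linarith)
    exact this
  have hint1 := phi_integrable (p := p + 1) (q := q) hx (by linarith)
  have hint0 := phi_integrable (p := p) (q := q) hx hp
  have hintall : IntegrableOn
      (fun t : ℝ => phi x (p+2) q t - (2*r) * phi x (p+1) q t + r^2 * phi x p q t) (Ioi 0) :=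
    (hint2.sub (hint1.const_mul _)).add (hint0.const_mul _)
  have hpt : ∀ t ∈ Ioi (0:ℝ), phi x p q t * (t - r)^2
      = phi x (p+2) q t - (2*r) * phi x (p+1) q t + r^2 * phi x p q t := by
    intro t ht
    have ht0 : (0:ℝ) < t := ht
    unfold phi
    rw [show p + 2 = (p+1) + 1 by ring, Real.rpow_add_one (ne_of_gt ht0),
      Real.rpow_add_one (ne_of_gt ht0)]
    ring
  have hkey : 0 < ∫ t in Ioi (0:ℝ), phi x p q t * (t - r)^2 := by
    rw [setIntegral_pos_iff_support_of_nonneg_ae ?h1 ?h2]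
    · apply lt_of_lt_of_le ?_ (measure_mono (show Ioi (0:ℝ) \ {r} ⊆ _ from ?_))
      · show (0:ENNReal) < volume (Ioi (0:ℝ) \ {r})
        rw [measure_diff_null (volume_singleton)]
        simp
      · intro t ht
        refine ⟨?_, ht.1⟩
        have h1 : 0 < phi x p q t := phi_pos ht.1
        have h2 : (t - r) ≠ 0 := sub_ne_zero.2 ht.2
        show phi x p q t * (t - r)^2 ≠ 0
        exact mul_ne_zero h1.ne' (pow_ne_zero 2 h2)
    case h1 =>
      filter_upwards [ae_restrict_mem measurableSet_Ioi] with t ht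
      exact mul_nonneg (phi_pos ht).le (sq_nonneg _)
    case h2 =>
      apply hintall.congr_fun ?_ measurableSet_Ioi
      intro t ht
      exact (hpt t ht).symm
  have hexp : (∫ t in Ioi (0:ℝ), phi x p q t * (t - r)^2)
      = J x (p+2) q - (2*r) * J x (p+1) q + r^2 * J x p q := by
    have k1m : IntegrableOn (fun t : ℝ => (2*r) * phi x (p+1) q t) (Ioi 0) :=
      hint1.const_mul _
    have k2 : IntegrableOn (fun t : ℝ => phi x (p+2) q t - (2*r) * phi x (p+1) q t) (Ioi 0) :=
      hint2.sub k1m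
    have k0 : IntegrableOn (fun t : ℝ => r^2 * phi x p q t) (Ioi 0) := hint0.const_mul _
    rw [setIntegral_congr_fun measurableSet_Ioi hpt,
      integral_add k2 k0, integral_sub hint2 k1m, integral_const_mul, integral_const_mul]
    rfl
  have h2' : 0 < J x (p+2) q - (2*r) * J x (p+1) q + r^2 * J x p q := hexp ▸ hkey
  have hrJ : r * J x p q = J x (p+1) q := div_mul_cancel₀ _ hJp.ne'
  have expand : J x p q * (J x (p+2) q - (2*r) * J x (p+1) q + r^2 * J x p q)
      = J x p q * J x (p+2) q - 2*(r*J x p q)*(J x (p+1) q) + (r*J x p q)*(r*J x p q) := by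
    ring
  rw [hrJ] at expand
  nlinarith [mul_pos hJp h2', expand]

theorem turan_main {a c x : ℝ} (ha : 0 < a) (hc : c < 0) (hx : 0 < x) :
    (a / (c * (1 + a - c))) *  (J x (a-1) (c-a-1))^2
      < (J x (a-1) (c-a-1))^2 - (J x (a-1) (c-a-2)) * (J x (a-1) (c-a)) := by
  set G := J x (a-1) (c-a-1) with hGdef
  set A := J x (a-1) (c-a-2) with hAdef
  set P := J x (a-1) (c-a) with hPdef
  set B := J x a (c-a-1) with hBdef
  set D := J x (a+1) (c-a-1) with hDdef
  set B' := J x a (c-a-2) with hB'def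
  set B'' := J x (a+1) (c-a-2) with hB''def
  have ha1 : (-1:ℝ) < a - 1 := by linarith
  have hG : 0 < G := J_pos hx ha1
  have hA : 0 < A := J_pos hx ha1
  have hB : 0 < B := J_pos hx (by linarith)
  have hD : 0 < D := J_pos hx (by linarith)
  have hB' : 0 < B' := J_pos hx (by linarith)
  -- step identities
  have hstep1 : G = A + B' := by
    have h := J_step (x:=x) (p:=a-1) (q:=c-a-2) hx ha1
    rw [show c-a-2+1 = c-a-1 from by ring, show a-1+1 = a from by ring] at h
    exact h
  have hstep2 : P = G + B := by
    have h := J_step (x:=x) (p:=a-1) (q:=c-a-1) hx ha1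
    rw [show c-a-1+1 = c-a from by ring, show a-1+1 = a from by ring] at h
    exact h
  have hstep3 : B = B' + B'' := by
    have h := J_step (x:=x) (p:=a) (q:=c-a-2) hx (by linarith)
    rw [show c-a-2+1 = c-a-1 from by ring] at h
    exact h
  -- integration by parts
  have hibp1 : x * B = a * G + (c-a-1) * B' := by
    have h := J_ibp (x:=x) (p:=a) (q:=c-a-1) hx ha
    rw [show a-(1:ℝ) = a-1 from by ring, show c-a-1-1 = c-a-2 from by ring] at h
    exact h
  have hibp2 : x * D = (a+1) * B + (c-a-1) * B'' := by
    have h := J_ibp (x:=x) (p:=a+1) (q:=c-a-1) hx (by linarith)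
    rw [show a+1-(1:ℝ) = a from by ring, show c-a-1-1 = c-a-2 from by ring] at h
    exact h
  -- Cauchy-Schwarz
  have hCS : B^2 < G * D := by
    have h := J_cs (x:=x) (p:=a-1) (q:=c-a-1) hx ha1
    rw [show a-1+1 = a from by ring, show a-1+2 = a+1 from by ring] at h
    exact h
  -- derived moment identities
  have hxB : x * B = (c-1) * G + (1+a-c) * A := by
    linear_combination hibp1 + (1+a-c) * hstep1
  have hxD : x * D = c * B + (1+a-c) * (G - A) := by
    linear_combination hibp2 + (1+a-c) * hstep3 - (1+a-c) * hstep1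
  -- the key quantity
  have hQpos : 0 < x * x * (G * D - B^2) :=
    mul_pos (mul_pos hx hx) (by linarith)
  have hiden : x * x * (G * D - B^2)
      = x * ((1+a-c) * G * (G - A) - B * ((1+a-c) * A - G)) := by
    linear_combination (x*G) * hxD - (x*B) * hxB
  have hS : 0 < (1+a-c) * G * (G - A) - B * ((1+a-c) * A - G) := by
    have hxX : 0 < x * ((1+a-c) * G * (G - A) - B * ((1+a-c) * A - G)) := hiden ▸ hQpos
    exact (mul_pos_iff_of_pos_left hx).1 hxX
  -- positivity facts
  have hlam : (0:ℝ) < 1 + a - c := by linarith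
  have hGA : A < G := by
    have : G - A = B' := by linarith [hstep1]
    linarith
  have hL : 0 < (1+a-c) * A - G := by
    have e : (1+a-c) * A - G = x * B - c * G := by linear_combination -hxB
    rw [e]
    linarith [mul_pos hx hB, mul_pos (show (0:ℝ) < -c by linarith) hG]
  have hkap : (0:ℝ) < (-c) * (1+a-c) := mul_pos (by linarith) hlam
  have hW : 0 < ((-c)*(1+a-c) + a) * G - ((-c)*(1+a-c)) * A := by
    linarith [mul_pos hkap (show (0:ℝ) < G - A by linarith), mul_pos ha hG]
  -- Psi identity
  have hPsi : (((-c)*(1+a-c) + a) * G - ((-c)*(1+a-c)) * A) * ((1+a-c) * A - G)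
      - ((-c)*(1+a-c)) * (1+a-c) * A * (G - A) = (a-c) * G * (x * B) := by
    linear_combination (-((a-c)*G)) * hxB
  have hpos1 : 0 < (a-c) * G * (x * B) :=
    mul_pos (mul_pos (by linarith) hG) (mul_pos hx hB)
  have h1 : ((-c)*(1+a-c)) * (1+a-c) * A * (G - A)
      < (((-c)*(1+a-c) + a) * G - ((-c)*(1+a-c)) * A) * ((1+a-c) * A - G) := by
    linarith [hPsi, hpos1]
  -- multiply chains
  have h2 : B * (((-c)*(1+a-c)) * (1+a-c) * A * (G - A))
      < B * ((((-c)*(1+a-c) + a) * G - ((-c)*(1+a-c)) * A) * ((1+a-c) * A - G)) :=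
    mul_lt_mul_of_pos_left h1 hB
  have h4 : (B * ((1+a-c) * A - G)) * ((((-c)*(1+a-c) + a)) * G - ((-c)*(1+a-c)) * A)
      < ((1+a-c) * G * (G - A)) * ((((-c)*(1+a-c) + a)) * G - ((-c)*(1+a-c)) * A) := by
    apply mul_lt_mul_of_pos_right ?_ hW
    linarith [hS]
  have h5 : ((1+a-c) * (G - A)) * (((-c)*(1+a-c)) * A * B)
      < ((1+a-c) * (G - A)) * (G * ((((-c)*(1+a-c) + a)) * G - ((-c)*(1+a-c)) * A)) := by
    linarith [h2, h4]
  have h6 : ((-c)*(1+a-c)) * A * B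
      < G * ((((-c)*(1+a-c) + a)) * G - ((-c)*(1+a-c)) * A) := by
    have hpos : 0 < (1+a-c) * (G - A) := mul_pos hlam (by linarith)
    exact lt_of_mul_lt_mul_left h5 hpos.le
  -- conclude
  have hfin : (c * (1+a-c)) * (G^2 - A * P) < a * G^2 := by
    rw [hstep2]
    linarith [h6]
  have hcl : c * (1+a-c) < 0 := by linarith [hkap]
  calc a / (c * (1 + a - c)) * G^2 = (a * G^2) / (c * (1+a-c)) := by ring
    _ < G^2 - A * P := by
        rw [div_lt_iff_of_neg hcl]
        linarith [hfin]
end TuranAux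

theorem turan_shift_c_lower2 (a c x : ℝ) (ha : 0 < a) (hc : c < 0) (hx : 0 < x) :
    (tricomiPsi a c x) ^ 2 - tricomiPsi a (c - 1) x * tricomiPsi a (c + 1) x
      > (a / (c * (1 + a - c))) * (tricomiPsi a c x) ^ 2 := by
  have hmain := TuranAux.turan_main ha hc hx
  have hG : 0 < Real.Gamma a := Real.Gamma_pos_of_pos ha
  have e_c : tricomiPsi a c x = (1/Real.Gamma a) * TuranAux.J x (a-1) (c-a-1) := rfl
  have e_cm : tricomiPsi a (c-1) x = (1/Real.Gamma a) * TuranAux.J x (a-1) (c-a-2) := by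
    unfold tricomiPsi TuranAux.J TuranAux.phi
    rw [show c - 1 - a - 1 = c - a - 2 from by ring]
  have e_cp : tricomiPsi a (c+1) x = (1/Real.Gamma a) * TuranAux.J x (a-1) (c-a) := by
    unfold tricomiPsi TuranAux.J TuranAux.phi
    rw [show c + 1 - a - 1 = c - a from by ring]
  rw [e_c, e_cm, e_cp]
  set G := TuranAux.J x (a-1) (c-a-1)
  set A := TuranAux.J x (a-1) (c-a-2)
  set P := TuranAux.J x (a-1) (c-a)
  have hsq : (0:ℝ) < (1/Real.Gamma a)^2 := by positivity
  have h := mul_lt_mul_of_pos_left hmain hsq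
  calc a / (c * (1 + a - c)) * ((1/Real.Gamma a) * G)^2
      = (1/Real.Gamma a)^2 * (a / (c * (1 + a - c)) * G^2) := by ring
    _ < (1/Real.Gamma a)^2 * (G^2 - A * P) := h
    _ = ((1/Real.Gamma a) * G)^2 - (1/Real.Gamma a) * A * ((1/Real.Gamma a) * P) := by ring
end

section
/- For a > 0, c < 0, and x > 0, the inequality (Γ(a−c+1)/Γ(−c) · ψ(a+1,c+1,x))^{1/(a+1)} < (Γ(a−c+1)/Γ(1−c) · ψ(a,c,x))^{1/a} holds for the Tricomi confluent hypergeometric function ψ. -/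
open MeasureTheory Real Set Filter Topology

noncomputable def Phi (s p y : ℝ) : ℝ :=
  ∫ t in Set.Ioi (0:ℝ), Real.exp (-y * t) * t ^ (s - 1) * (1 + t) ^ p

lemma phi_cont (s p y : ℝ) :
    ContinuousOn (fun t : ℝ => Real.exp (-y * t) * t ^ (s - 1) * (1 + t) ^ p) (Set.Ioi 0) := by
  apply ContinuousOn.mul
  apply ContinuousOn.mul
  · exact (Real.continuous_exp.comp (continuous_const.mul continuous_id)).continuousOn
  · exact fun t ht => (Real.continuousAt_rpow_const t _ (Or.inl (ne_of_gt ht))).continuousWithinAt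
  · intro t ht
    have h1 : (1:ℝ) + t ≠ 0 := by have := mem_Ioi.1 ht; linarith
    exact ((Real.continuousAt_rpow_const (1+t) _ (Or.inl h1)).comp
      (continuous_const.add continuous_id).continuousAt).continuousWithinAt

lemma phi_measOn (s p y : ℝ) {A : Set ℝ} (hA : MeasurableSet A) (hAs : A ⊆ Set.Ioi 0) :
    AEStronglyMeasurable (fun t : ℝ => Real.exp (-y * t) * t ^ (s - 1) * (1 + t) ^ p)
      (volume.restrict A) :=
  ((phi_cont s p y).mono hAs).aestronglyMeasurable hA

lemma phi_pos {t : ℝ} (ht : 0 < t) (s p y : ℝ) :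
    0 < Real.exp (-y * t) * t ^ (s - 1) * (1 + t) ^ p := by
  have h1 : (0:ℝ) < 1 + t := by linarith
  positivity

/-- integrability on `(0,1]` for any `y`, provided `p ≤ 0`, `0 ≤ y`. -/
lemma intOn_Ioc {s p y : ℝ} (hs : 0 < s) (hp : p ≤ 0) (hy : 0 ≤ y) :
    IntegrableOn (fun t : ℝ => Real.exp (-y * t) * t ^ (s - 1) * (1 + t) ^ p) (Set.Ioc 0 1) := by
  have hint : IntegrableOn (fun t : ℝ => t ^ (s - 1)) (Set.Ioc 0 1) := by
    have := intervalIntegral.intervalIntegrable_rpow' (a := 0) (b := 1) (r := s - 1) (by linarith)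
    rwa [intervalIntegrable_iff_integrableOn_Ioc_of_le (by norm_num)] at this
  refine Integrable.mono' hint (phi_measOn s p y measurableSet_Ioc Ioc_subset_Ioi_self) ?_
  filter_upwards [ae_restrict_mem measurableSet_Ioc] with t ht
  have ht0 : 0 < t := ht.1
  have h1t : (1:ℝ) ≤ 1 + t := by linarith
  rw [Real.norm_eq_abs, abs_of_nonneg (le_of_lt (phi_pos ht0 s p y))]
  have he : Real.exp (-y * t) ≤ 1 := by
    rw [Real.exp_le_one_iff]; nlinarith
  have hw : (1 + t) ^ p ≤ 1 := Real.rpow_le_one_of_one_le_of_nonpos h1t hp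
  calc Real.exp (-y * t) * t ^ (s - 1) * (1 + t) ^ p
      ≤ 1 * t ^ (s - 1) * 1 := by
        apply mul_le_mul (mul_le_mul he le_rfl (by positivity) (by norm_num)) hw (by positivity)
        positivity
    _ = t ^ (s - 1) := by ring

/-- integrability on `(1,∞)` in the `y > 0` case. -/
lemma intOn_Ioi_one_pos {s p y : ℝ} (hs : 0 < s) (hp : p ≤ 0) (hy : 0 < y) :
    IntegrableOn (fun t : ℝ => Real.exp (-y * t) * t ^ (s - 1) * (1 + t) ^ p) (Set.Ioi 1) := by
  have hint : IntegrableOn (fun t : ℝ => t ^ (s - 1) * Real.exp (-y * t)) (Set.Ioi 1) := by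
    have h := integrableOn_rpow_mul_exp_neg_mul_rpow (p := 1) (s := s - 1) (b := y)
      (by linarith) one_pos hy
    have h' : IntegrableOn (fun x : ℝ => x ^ (s - 1) * Real.exp (-y * x)) (Set.Ioi 0) := by
      refine h.congr_fun (fun x hx => ?_) measurableSet_Ioi
      simp only [Real.rpow_one]
    exact h'.mono_set (fun x hx => mem_Ioi.2 (lt_trans one_pos hx))
  refine Integrable.mono' hint (phi_measOn s p y measurableSet_Ioi (fun t ht => mem_Ioi.2 (lt_trans one_pos ht))) ?_
  filter_upwards [ae_restrict_mem measurableSet_Ioi] with t ht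
  have ht0 : (0:ℝ) < t := lt_trans one_pos ht
  have h1t : (1:ℝ) ≤ 1 + t := by linarith
  rw [Real.norm_eq_abs, abs_of_nonneg (le_of_lt (phi_pos ht0 s p y))]
  have hw : (1 + t) ^ p ≤ 1 := Real.rpow_le_one_of_one_le_of_nonpos h1t hp
  calc Real.exp (-y * t) * t ^ (s - 1) * (1 + t) ^ p
      ≤ Real.exp (-y * t) * t ^ (s - 1) * 1 := by
        apply mul_le_mul le_rfl hw (by positivity) (by positivity)
    _ = t ^ (s - 1) * Real.exp (-y * t) := by ring

/-- integrability on `(1,∞)` for `0 ≤ y` provided `s + p < 0`. -/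
lemma intOn_Ioi_one_zero {s p y : ℝ} (hp : p ≤ 0) (hsp : s + p < 0) (hy : 0 ≤ y) :
    IntegrableOn (fun t : ℝ => Real.exp (-y * t) * t ^ (s - 1) * (1 + t) ^ p) (Set.Ioi 1) := by
  have hint : IntegrableOn (fun t : ℝ => t ^ (s - 1 + p)) (Set.Ioi 1) :=
    integrableOn_Ioi_rpow_of_lt (by linarith) one_pos
  refine Integrable.mono' hint (phi_measOn s p y measurableSet_Ioi (fun t ht => mem_Ioi.2 (lt_trans one_pos ht))) ?_
  filter_upwards [ae_restrict_mem measurableSet_Ioi] with t ht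
  have ht0 : (0:ℝ) < t := lt_trans one_pos ht
  rw [Real.norm_eq_abs, abs_of_nonneg (le_of_lt (phi_pos ht0 s p y))]
  have he : Real.exp (-y * t) ≤ 1 := by
    rw [Real.exp_le_one_iff]; nlinarith
  have hw : (1 + t) ^ p ≤ t ^ p :=
    Real.rpow_le_rpow_of_nonpos ht0 (by linarith) hp
  calc Real.exp (-y * t) * t ^ (s - 1) * (1 + t) ^ p
      ≤ 1 * t ^ (s - 1) * t ^ p := by
        apply mul_le_mul (mul_le_mul he le_rfl (by positivity) (by norm_num)) hw (by positivity)
        positivity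
    _ = t ^ (s - 1 + p) := by rw [one_mul, ← Real.rpow_add ht0]

/-- Main integrability lemma. -/
lemma phi_intOn {s p y : ℝ} (hs : 0 < s) (hp : p ≤ 0) (hy : 0 ≤ y)
    (h : 0 < y ∨ s + p < 0) :
    IntegrableOn (fun t : ℝ => Real.exp (-y * t) * t ^ (s - 1) * (1 + t) ^ p) (Set.Ioi 0) := by
  rw [show Set.Ioi (0:ℝ) = Set.Ioc 0 1 ∪ Set.Ioi 1 from (Set.Ioc_union_Ioi_eq_Ioi zero_le_one).symm]
  refine (intOn_Ioc hs hp hy).union ?_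
  rcases h with h | h
  · exact intOn_Ioi_one_pos hs hp h
  · exact intOn_Ioi_one_zero hp h hy

lemma Phi_pos {s p y : ℝ} (hs : 0 < s) (hp : p ≤ 0) (hy : 0 ≤ y)
    (h : 0 < y ∨ s + p < 0) : 0 < Phi s p y := by
  rw [Phi, setIntegral_pos_iff_support_of_nonneg_ae ?_ (phi_intOn hs hp hy h)]
  · refine lt_of_lt_of_le ?_ (measure_mono (?_ : Set.Ioi (1:ℝ) ⊆ _))
    · simp [Real.volume_Ioi]
    · intro t ht
      have ht0 : (0:ℝ) < t := lt_trans one_pos ht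
      exact ⟨ne_of_gt (phi_pos ht0 s p y), ht0⟩
  · filter_upwards [ae_restrict_mem measurableSet_Ioi] with t ht
    exact (phi_pos ht s p y).le

lemma hasDerivAt_phi_aux (t : ℝ) (C y : ℝ) :
    HasDerivAt (fun u : ℝ => Real.exp (-u * t) * C) (-t * (Real.exp (-y * t) * C)) y := by
  have h1 : HasDerivAt (fun u : ℝ => -u * t) (-t) y := by
    simpa using ((hasDerivAt_id y).neg.mul_const t)
  have h2 := (h1.exp).mul_const C
  refine h2.congr_deriv ?_
  ring

lemma Phi_hasDerivAt {s p y : ℝ} (hs : 0 < s) (hp : p ≤ 0) (hy : 0 < y) :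
    HasDerivAt (fun u => Phi s p u) (-Phi (s + 1) p y) y := by
  have key := hasDerivAt_integral_of_dominated_loc_of_deriv_le
    (μ := volume.restrict (Set.Ioi 0)) (x₀ := y)
    (F := fun u t => Real.exp (-u * t) * t ^ (s - 1) * (1 + t) ^ p)
    (F' := fun u t => -t * (Real.exp (-u * t) * t ^ (s - 1) * (1 + t) ^ p))
    (bound := fun t => Real.exp (-(y/2) * t) * t ^ ((s + 1) - 1) * (1 + t) ^ p)
    (Metric.ball_mem_nhds y (half_pos hy)) ?_ ?_ ?_ ?_ ?_ ?_
  · have h2 := key.2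
    have : (∫ t in Set.Ioi (0:ℝ), -t * (Real.exp (-y * t) * t ^ (s - 1) * (1 + t) ^ p))
        = -Phi (s + 1) p y := by
      rw [Phi, ← integral_neg]
      refine setIntegral_congr_fun measurableSet_Ioi (fun t ht => ?_)
      have ht0 : (0:ℝ) < t := ht
      have : t ^ ((s + 1) - 1) = t * t ^ (s - 1) := by
        rw [show (s + 1) - 1 = 1 + (s - 1) by ring, Real.rpow_add ht0, Real.rpow_one]
      rw [this]; ring
    rwa [this] at h2
  · filter_upwards with u
    exact phi_measOn s p u measurableSet_Ioi (fun t ht => ht)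
  · exact phi_intOn hs hp hy.le (Or.inl hy)
  · refine AEStronglyMeasurable.mul ?_ (phi_measOn s p y measurableSet_Ioi (fun t ht => ht))
    exact (continuous_neg.comp continuous_id).aestronglyMeasurable
  · filter_upwards [ae_restrict_mem measurableSet_Ioi] with t ht u hu
    have ht0 : (0:ℝ) < t := ht
    have h1t : (0:ℝ) < 1 + t := by linarith
    have hu2 : y/2 ≤ u := by
      have h := Metric.mem_ball.1 hu
      rw [Real.dist_eq] at h
      have := abs_lt.1 h
      linarith [this.1]
    have he : Real.exp (-u * t) ≤ Real.exp (-(y/2) * t) := by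
      apply Real.exp_le_exp.2; nlinarith
    rw [Real.norm_eq_abs, abs_mul, abs_neg, abs_of_nonneg ht0.le,
      abs_of_nonneg (phi_pos ht0 s p u).le]
    have : t ^ ((s + 1) - 1) = t * t ^ (s - 1) := by
      rw [show (s + 1) - 1 = 1 + (s - 1) by ring, Real.rpow_add ht0, Real.rpow_one]
    rw [this]
    calc t * (Real.exp (-u * t) * t ^ (s - 1) * (1 + t) ^ p)
        ≤ t * (Real.exp (-(y/2) * t) * t ^ (s - 1) * (1 + t) ^ p) := by
          apply mul_le_mul_of_nonneg_left _ ht0.le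
          apply mul_le_mul_of_nonneg_right (mul_le_mul_of_nonneg_right he (by positivity))
            (by positivity)
      _ = Real.exp (-(y/2) * t) * (t * t ^ (s - 1)) * (1 + t) ^ p := by ring
  · exact phi_intOn (by linarith : (0:ℝ) < s + 1) hp (by positivity) (Or.inl (half_pos hy))
  · filter_upwards [ae_restrict_mem measurableSet_Ioi] with t ht u hu
    simpa [mul_assoc] using hasDerivAt_phi_aux t (t ^ (s - 1) * (1 + t) ^ p) u

lemma Phi_IBP {s p y : ℝ} (hs : 0 < s) (hp : p ≤ 0) (hy : 0 < y) :
    y * Phi (s + 1) p y = s * Phi s p y + p * Phi (s + 1) (p - 1) y := by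
  set F : ℝ → ℝ := fun t => Real.exp (-y * t) * t ^ s * (1 + t) ^ p with hF
  set D : ℝ → ℝ := fun t =>
    (-y * (Real.exp (-y * t) * t ^ s) + Real.exp (-y * t) * (s * t ^ (s - 1))) * (1 + t) ^ p
      + Real.exp (-y * t) * t ^ s * (p * (1 + t) ^ (p - 1)) with hD
  have hderiv : ∀ t ∈ Set.Ioi (0:ℝ), HasDerivAt F (D t) t := by
    intro t ht
    have ht0 : (0:ℝ) < t := ht
    have h1t : (0:ℝ) < 1 + t := by linarith
    have h1 : HasDerivAt (fun t : ℝ => Real.exp (-y * t)) (-y * Real.exp (-y * t)) t := by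
      have := ((hasDerivAt_id t).const_mul (-y)).exp
      simpa [mul_comm] using this
    have h2 : HasDerivAt (fun t : ℝ => t ^ s) (s * t ^ (s - 1)) t :=
      Real.hasDerivAt_rpow_const (Or.inl (ne_of_gt ht0))
    have h3 : HasDerivAt (fun t : ℝ => (1 + t) ^ p) (p * (1 + t) ^ (p - 1)) t := by
      have hinner : HasDerivAt (fun t : ℝ => 1 + t) 1 t := (hasDerivAt_id t).const_add 1
      have := (Real.hasDerivAt_rpow_const (p := p) (Or.inl (ne_of_gt h1t))).comp t hinner
      rw [mul_one] at this
      exact this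
    have := (h1.mul h2).mul h3
    refine this.congr_deriv ?_
    simp only [hD, Pi.mul_apply]
    ring
  -- the three integrand pieces
  have hint1 : IntegrableOn (fun t : ℝ => Real.exp (-y * t) * t ^ ((s+1) - 1) * (1 + t) ^ p)
      (Set.Ioi 0) := phi_intOn (by linarith) hp hy.le (Or.inl hy)
  have hint2 : IntegrableOn (fun t : ℝ => Real.exp (-y * t) * t ^ (s - 1) * (1 + t) ^ p)
      (Set.Ioi 0) := phi_intOn hs hp hy.le (Or.inl hy)
  have hint3 : IntegrableOn (fun t : ℝ => Real.exp (-y * t) * t ^ ((s+1) - 1) * (1 + t) ^ (p - 1))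
      (Set.Ioi 0) := phi_intOn (by linarith) (by linarith) hy.le (Or.inl hy)
  have hDeq : ∀ t ∈ Set.Ioi (0:ℝ), D t =
      -y * (Real.exp (-y * t) * t ^ ((s+1) - 1) * (1 + t) ^ p)
      + (s * (Real.exp (-y * t) * t ^ (s - 1) * (1 + t) ^ p)
        + p * (Real.exp (-y * t) * t ^ ((s+1) - 1) * (1 + t) ^ (p - 1))) := by
    intro t ht
    have ht0 : (0:ℝ) < t := ht
    rw [show s + 1 - 1 = s by ring]
    have hts : t ^ s = t * t ^ (s - 1) := by
      rw [show s = 1 + (s - 1) by ring, Real.rpow_add ht0, Real.rpow_one]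
      ring_nf
    simp only [hD]
    ring
  have hsum2 : IntegrableOn (fun t : ℝ =>
      s * (Real.exp (-y * t) * t ^ (s - 1) * (1 + t) ^ p)
        + p * (Real.exp (-y * t) * t ^ ((s+1) - 1) * (1 + t) ^ (p - 1))) (Set.Ioi 0) :=
    (hint2.const_mul s).add (hint3.const_mul p)
  have hsum : IntegrableOn (fun t : ℝ =>
      -y * (Real.exp (-y * t) * t ^ ((s+1) - 1) * (1 + t) ^ p)
      + (s * (Real.exp (-y * t) * t ^ (s - 1) * (1 + t) ^ p)
        + p * (Real.exp (-y * t) * t ^ ((s+1) - 1) * (1 + t) ^ (p - 1)))) (Set.Ioi 0) :=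
    (hint1.const_mul (-y)).add hsum2
  have hDint : IntegrableOn D (Set.Ioi 0) :=
    IntegrableOn.congr_fun hsum (fun t ht => (hDeq t ht).symm) measurableSet_Ioi
  have htop : Tendsto F atTop (𝓝 0) := by
    have hb := tendsto_rpow_mul_exp_neg_mul_atTop_nhds_zero s y hy
    refine squeeze_zero' ?_ ?_ hb
    · filter_upwards [eventually_gt_atTop (0:ℝ)] with t ht
      have h1t : (0:ℝ) < 1 + t := by linarith
      positivity
    · filter_upwards [eventually_gt_atTop (0:ℝ)] with t ht
      have h1t : (1:ℝ) ≤ 1 + t := by linarith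
      have : (1 + t) ^ p ≤ 1 := Real.rpow_le_one_of_one_le_of_nonpos h1t hp
      calc Real.exp (-y * t) * t ^ s * (1 + t) ^ p
          ≤ Real.exp (-y * t) * t ^ s * 1 :=
            mul_le_mul_of_nonneg_left this (by positivity)
        _ = t ^ s * Real.exp (-y * t) := by ring
  have hcont : ContinuousWithinAt F (Set.Ici 0) 0 := by
    apply ContinuousAt.continuousWithinAt
    apply ContinuousAt.mul
    apply ContinuousAt.mul
    · exact (Real.continuous_exp.comp (continuous_const.mul continuous_id)).continuousAt
    · exact Real.continuousAt_rpow_const 0 s (Or.inr hs.le)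
    · exact ((Real.continuousAt_rpow_const (1 + 0) p (Or.inl (by norm_num))).comp
        ((continuous_const.add continuous_id).continuousAt))
  have hF0 : F 0 = 0 := by
    simp [hF, Real.zero_rpow (ne_of_gt hs)]
  have key := integral_Ioi_of_hasDerivAt_of_tendsto hcont hderiv hDint htop
  rw [hF0, sub_zero] at key
  have expand : ∫ t in Set.Ioi (0:ℝ), D t =
      -y * Phi (s+1) p y + (s * Phi s p y + p * Phi (s+1) (p-1) y) := by
    rw [setIntegral_congr_fun measurableSet_Ioi hDeq, integral_add ((hint1.const_mul (-y))) hsum2,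
      integral_add (hint2.const_mul s) (hint3.const_mul p),
      integral_const_mul, integral_const_mul, integral_const_mul]
    rfl
  rw [key] at expand
  have : y * Phi (s+1) p y = s * Phi s p y + p * Phi (s+1) (p-1) y := by linarith
  exact this

lemma Phi_chebyshev {s p y : ℝ} (hs : 0 < s) (hp : p ≤ 0) (hy : 0 < y) :
    Phi (s + 2) (p - 1) y * Phi (s + 1) p y < Phi (s + 1) (p - 1) y * Phi (s + 2) p y := by
  set μ := volume.restrict (Set.Ioi (0:ℝ)) with hμ
  set A : ℝ → ℝ := fun t => Real.exp (-y * t) * t ^ ((s+1) - 1) * (1 + t) ^ p with hA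
  set B : ℝ → ℝ := fun t => Real.exp (-y * t) * t ^ ((s+2) - 1) * (1 + t) ^ p with hB
  set C : ℝ → ℝ := fun t => Real.exp (-y * t) * t ^ ((s+1) - 1) * (1 + t) ^ (p-1) with hC
  set E : ℝ → ℝ := fun t => Real.exp (-y * t) * t ^ ((s+2) - 1) * (1 + t) ^ (p-1) with hE
  have hAi : Integrable A μ := phi_intOn (by linarith) hp hy.le (Or.inl hy)
  have hBi : Integrable B μ := phi_intOn (by linarith) hp hy.le (Or.inl hy)
  have hCi : Integrable C μ := phi_intOn (by linarith) (by linarith) hy.le (Or.inl hy)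
  have hEi : Integrable E μ := phi_intOn (by linarith) (by linarith) hy.le (Or.inl hy)
  -- pointwise identities
  have hBA : ∀ t : ℝ, 0 < t → B t = A t * t := by
    intro t ht
    simp only [hA, hB]
    rw [show (s+2) - 1 = ((s+1) - 1) + 1 by ring, Real.rpow_add ht, Real.rpow_one]
    ring
  have hCA : ∀ t : ℝ, 0 < t → C t = A t * (1 + t)⁻¹ := by
    intro t ht
    have h1t : (0:ℝ) < 1 + t := by linarith
    simp only [hA, hC]
    rw [show p - 1 = p + (-1) by ring, Real.rpow_add h1t, Real.rpow_neg_one]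
    ring
  have hEA : ∀ t : ℝ, 0 < t → E t = A t * t * (1 + t)⁻¹ := by
    intro t ht
    have h1t : (0:ℝ) < 1 + t := by linarith
    simp only [hA, hE]
    rw [show p - 1 = p + (-1) by ring, Real.rpow_add h1t, Real.rpow_neg_one,
      show (s+2) - 1 = ((s+1) - 1) + 1 by ring, Real.rpow_add ht, Real.rpow_one]
    ring
  set H : ℝ × ℝ → ℝ := fun z =>
    C z.1 * B z.2 - E z.1 * A z.2 - A z.1 * E z.2 + B z.1 * C z.2 with hH
  have hHint : Integrable H (μ.prod μ) :=
    (((hCi.mul_prod hBi).sub (hEi.mul_prod hAi)).sub (hAi.mul_prod hEi)).add (hBi.mul_prod hCi)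
  have hHval : ∀ z : ℝ × ℝ, 0 < z.1 → 0 < z.2 →
      H z = A z.1 * A z.2 * (z.2 - z.1)^2 / ((1 + z.1) * (1 + z.2)) := by
    rintro ⟨u, v⟩ hu hv
    have h1u : (0:ℝ) < 1 + u := by linarith
    have h1v : (0:ℝ) < 1 + v := by linarith
    simp only [hH]
    rw [hBA u hu, hBA v hv, hCA u hu, hCA v hv, hEA u hu, hEA v hv]
    field_simp
    ring
  have hH0 : 0 ≤ᵐ[μ.prod μ] H := by
    rw [hμ, Measure.prod_restrict]
    filter_upwards [ae_restrict_mem (measurableSet_Ioi.prod measurableSet_Ioi)] with z hz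
    have hz1 : (0:ℝ) < z.1 := hz.1
    have hz2 : (0:ℝ) < z.2 := hz.2
    rw [hHval z hz1 hz2]
    have h1 : 0 < A z.1 := phi_pos hz1 _ _ _
    have h2 : 0 < A z.2 := phi_pos hz2 _ _ _
    have h3 : (0:ℝ) < 1 + z.1 := by linarith
    have h4 : (0:ℝ) < 1 + z.2 := by linarith
    positivity
  have hHpos : 0 < ∫ z, H z ∂(μ.prod μ) := by
    rw [integral_pos_iff_support_of_nonneg_ae hH0 hHint]
    refine lt_of_lt_of_le ?_ (measure_mono (?_ : Set.Ioo (0:ℝ) 1 ×ˢ Set.Ioo (1:ℝ) 2 ⊆ _))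
    · rw [hμ, Measure.prod_prod, Measure.restrict_apply' measurableSet_Ioi,
        Measure.restrict_apply' measurableSet_Ioi,
        show Set.Ioo (0:ℝ) 1 ∩ Set.Ioi 0 = Set.Ioo 0 1 by
          rw [Set.inter_eq_left]; exact fun t ht => ht.1,
        show Set.Ioo (1:ℝ) 2 ∩ Set.Ioi 0 = Set.Ioo 1 2 by
          rw [Set.inter_eq_left]; exact fun t ht => lt_trans one_pos ht.1]
      simp [Real.volume_Ioo]
    · rintro ⟨u, v⟩ ⟨hu, hv⟩
      have hu0 : (0:ℝ) < u := hu.1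
      have hv0 : (0:ℝ) < v := lt_trans one_pos hv.1
      have hne : v - u ≠ 0 := by
        have : u < v := lt_trans hu.2 hv.1
        intro h; nlinarith
      rw [Function.mem_support, hHval ⟨u, v⟩ hu0 hv0]
      have h1 : 0 < A u := phi_pos hu0 _ _ _
      have h2 : 0 < A v := phi_pos hv0 _ _ _
      have h3 : (0:ℝ) < 1 + u := by linarith
      have h4 : (0:ℝ) < 1 + v := by linarith
      positivity
  have hInt : ∫ z, H z ∂(μ.prod μ) =
      2 * ((∫ t, C t ∂μ) * (∫ t, B t ∂μ) - (∫ t, E t ∂μ) * (∫ t, A t ∂μ)) := by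
    have i1 : Integrable (fun z : ℝ × ℝ => C z.1 * B z.2) (μ.prod μ) := hCi.mul_prod hBi
    have i2 : Integrable (fun z : ℝ × ℝ => E z.1 * A z.2) (μ.prod μ) := hEi.mul_prod hAi
    have i3 : Integrable (fun z : ℝ × ℝ => A z.1 * E z.2) (μ.prod μ) := hAi.mul_prod hEi
    have i4 : Integrable (fun z : ℝ × ℝ => B z.1 * C z.2) (μ.prod μ) := hBi.mul_prod hCi
    have i12 : Integrable (fun z : ℝ × ℝ => C z.1 * B z.2 - E z.1 * A z.2) (μ.prod μ) := i1.sub i2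
    have i123 : Integrable (fun z : ℝ × ℝ => C z.1 * B z.2 - E z.1 * A z.2 - A z.1 * E z.2)
      (μ.prod μ) := i12.sub i3
    simp only [hH]
    rw [integral_add i123 i4, integral_sub i12 i3, integral_sub i1 i2,
      integral_prod_mul, integral_prod_mul, integral_prod_mul, integral_prod_mul]
    ring
  rw [hInt] at hHpos
  have hPhiC : Phi (s+1) (p-1) y = ∫ t, C t ∂μ := rfl
  have hPhiB : Phi (s+2) p y = ∫ t, B t ∂μ := rfl
  have hPhiE : Phi (s+2) (p-1) y = ∫ t, E t ∂μ := rfl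
  have hPhiA : Phi (s+1) p y = ∫ t, A t ∂μ := rfl
  rw [hPhiA, hPhiB, hPhiC, hPhiE]
  linarith

lemma Phi_tendsto_zero {s p : ℝ} (hs : 0 < s) (hp : p ≤ 0) (hsp : s + p < 0) :
    Tendsto (fun y => Phi s p y) (𝓝[>] (0:ℝ)) (𝓝 (Phi s p 0)) := by
  have h := tendsto_integral_filter_of_dominated_convergence
    (μ := volume.restrict (Set.Ioi 0)) (l := 𝓝[>] (0:ℝ))
    (F := fun y (t:ℝ) => Real.exp (-y * t) * t ^ (s - 1) * (1 + t) ^ p)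
    (f := fun t : ℝ => Real.exp (-0 * t) * t ^ (s - 1) * (1 + t) ^ p)
    (bound := fun t : ℝ => Real.exp (-0 * t) * t ^ (s - 1) * (1 + t) ^ p)
    ?_ ?_ ?_ ?_
  · exact h
  · filter_upwards with y
    exact phi_measOn s p y measurableSet_Ioi (fun t ht => ht)
  · filter_upwards [self_mem_nhdsWithin] with y hy
    filter_upwards [ae_restrict_mem measurableSet_Ioi] with t ht
    have ht0 : (0:ℝ) < t := ht
    have hy0 : (0:ℝ) < y := hy
    rw [Real.norm_eq_abs, abs_of_nonneg (phi_pos ht0 s p y).le]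
    have he : Real.exp (-y * t) ≤ Real.exp (-0 * t) := by
      apply Real.exp_le_exp.2; nlinarith
    have h1t : (0:ℝ) < 1 + t := by linarith
    apply mul_le_mul_of_nonneg_right (mul_le_mul_of_nonneg_right he (by positivity)) (by positivity)
  · exact phi_intOn hs hp le_rfl (Or.inr hsp)
  · filter_upwards [ae_restrict_mem measurableSet_Ioi] with t _
    have hcont : Continuous (fun y : ℝ => Real.exp (-y * t) * t ^ (s - 1) * (1 + t) ^ p) := by
      exact ((Real.continuous_exp.comp ((continuous_neg.comp continuous_id).mul
        continuous_const)).mul continuous_const).mul continuous_const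
    exact (hcont.tendsto 0).mono_left nhdsWithin_le_nhds

lemma betaIntegral_Ioo {s r : ℝ} (hs : 0 < s) (hr : 0 < r) :
    ∫ u in Set.Ioo (0:ℝ) 1, u ^ (s - 1) * (1 - u) ^ (r - 1)
      = Real.Gamma s * Real.Gamma r / Real.Gamma (s + r) := by
  have hI : ∫ u in Set.Ioo (0:ℝ) 1, u ^ (s - 1) * (1 - u) ^ (r - 1)
      = ∫ u in (0:ℝ)..1, u ^ (s - 1) * (1 - u) ^ (r - 1) := by
    rw [intervalIntegral.integral_of_le zero_le_one, ← integral_Ioc_eq_integral_Ioo]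
  have hbeta : Complex.betaIntegral (s : ℂ) (r : ℂ)
      = ((∫ u in (0:ℝ)..1, u ^ (s - 1) * (1 - u) ^ (r - 1) : ℝ) : ℂ) := by
    rw [Complex.betaIntegral, ← intervalIntegral.integral_ofReal]
    refine intervalIntegral.integral_congr (fun x hx => ?_)
    rw [Set.uIcc_of_le zero_le_one] at hx
    have hx0 : (0:ℝ) ≤ x := hx.1
    have hx1 : (0:ℝ) ≤ 1 - x := by linarith [hx.2]
    rw [show ((s:ℂ) - 1) = ((s - 1 : ℝ) : ℂ) by push_cast; ring,
      show ((r:ℂ) - 1) = ((r - 1 : ℝ) : ℂ) by push_cast; ring,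
      show (1 - (x:ℂ)) = ((1 - x : ℝ) : ℂ) by push_cast; ring,
      ← Complex.ofReal_cpow hx0, ← Complex.ofReal_cpow hx1, ← Complex.ofReal_mul]
  have hG := Complex.Gamma_mul_Gamma_eq_betaIntegral
    (by simpa using hs : 0 < (s:ℂ).re) (by simpa using hr : 0 < (r:ℂ).re)
  rw [hbeta] at hG
  have hG' : (Real.Gamma s : ℂ) * (Real.Gamma r : ℂ)
      = ((Real.Gamma (s + r) : ℝ) : ℂ) * ((∫ u in (0:ℝ)..1, u ^ (s-1) * (1-u) ^ (r-1) : ℝ) : ℂ) := by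
    rw [← Complex.Gamma_ofReal, ← Complex.Gamma_ofReal, ← Complex.Gamma_ofReal]
    push_cast at hG ⊢
    convert hG using 2
  have hreal : Real.Gamma s * Real.Gamma r
      = Real.Gamma (s + r) * ∫ u in (0:ℝ)..1, u ^ (s-1) * (1-u) ^ (r-1) := by
    exact_mod_cast hG'
  have hGpos : 0 < Real.Gamma (s + r) := Real.Gamma_pos_of_pos (by linarith)
  rw [hI]
  field_simp
  linarith [hreal]

lemma Phi_zero_eq {s r : ℝ} (hs : 0 < s) (hr : 0 < r) :
    Phi s (-(s+r)) 0 = Real.Gamma s * Real.Gamma r / Real.Gamma (s + r) := by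
  have h1 : Phi s (-(s+r)) 0 = ∫ t in Set.Ioi (0:ℝ), t ^ (s-1) * (1 + t) ^ (-(s+r)) := by
    rw [Phi]
    refine setIntegral_congr_fun measurableSet_Ioi (fun t _ => ?_)
    rw [neg_zero, zero_mul, Real.exp_zero, one_mul]
  -- substitution t = u / (1 - u)
  set f : ℝ → ℝ := fun u => u / (1 - u) with hf
  set f' : ℝ → ℝ := fun u => ((1 - u)^2)⁻¹ with hf'
  have hderiv : ∀ u ∈ Set.Ioo (0:ℝ) 1, HasDerivWithinAt f (f' u) (Set.Ioo 0 1) u := by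
    intro u hu
    have h1u : (1:ℝ) - u ≠ 0 := by have := hu.2; intro h; linarith [h]
    have hd1 : HasDerivAt (fun u : ℝ => 1 - u) (-1) u := by
      have := (hasDerivAt_const u (1:ℝ)).sub (hasDerivAt_id u)
      rw [zero_sub] at this
      exact this
    have hd2 := hd1.inv h1u
    have hd3 := (hasDerivAt_id u).mul hd2
    have : HasDerivAt f (f' u) u := by
      refine hd3.congr_deriv ?_
      simp only [hf', Pi.inv_apply, id]; field_simp
      ring
    exact this.hasDerivWithinAt
  have hinj : Set.InjOn f (Set.Ioo 0 1) := by
    intro u hu v hv huv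
    have h1u : (0:ℝ) < 1 - u := by linarith [hu.2]
    have h1v : (0:ℝ) < 1 - v := by linarith [hv.2]
    rw [hf] at huv
    field_simp at huv
    nlinarith [huv]
  have himg : f '' Set.Ioo 0 1 = Set.Ioi 0 := by
    ext t
    constructor
    · rintro ⟨u, hu, rfl⟩
      have h1u : (0:ℝ) < 1 - u := by linarith [hu.2]
      exact div_pos hu.1 h1u
    · intro ht
      have ht0 : (0:ℝ) < t := ht
      have h1t : (0:ℝ) < 1 + t := by linarith
      refine ⟨t / (1 + t), ⟨div_pos ht0 h1t, by rw [div_lt_one h1t]; linarith⟩, ?_⟩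
      rw [hf]
      field_simp
      ring
  have hsub := integral_image_eq_integral_abs_deriv_smul measurableSet_Ioo hderiv hinj
    (fun t => t ^ (s-1) * (1 + t) ^ (-(s+r)))
  rw [himg] at hsub
  rw [h1, hsub]
  have h2 : ∀ u ∈ Set.Ioo (0:ℝ) 1,
      |f' u| • (f u ^ (s-1) * (1 + f u) ^ (-(s+r))) = u ^ (s-1) * (1 - u) ^ (r-1) := by
    intro u hu
    have hu0 : (0:ℝ) < u := hu.1
    have h1u : (0:ℝ) < 1 - u := by linarith [hu.2]
    have hfu : 1 + f u = (1 - u)⁻¹ := by rw [hf]; field_simp; ring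
    rw [smul_eq_mul, hfu, hf, hf']
    simp only []
    rw [Real.div_rpow hu0.le h1u.le]
    have e2 : ((1-u)⁻¹) ^ (-(s+r)) = (1-u) ^ (s+r) := by
      rw [← Real.rpow_neg_one (1-u), ← Real.rpow_mul h1u.le]
      norm_num
    rw [e2, abs_of_pos (by positivity : (0:ℝ) < ((1-u)^2)⁻¹)]
    have e4 : (1-u) ^ (s+r) = (1-u) ^ (s-1) * ((1-u) ^ (r-1) * (1-u)^2) := by
      rw [← Real.rpow_natCast (1-u) 2, ← Real.rpow_add h1u, ← Real.rpow_add h1u]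
      norm_num
      congr 1
      ring
    rw [e4]
    have hpow : (0:ℝ) < (1-u) ^ (s-1) := Real.rpow_pos_of_pos h1u _
    field_simp
  rw [setIntegral_congr_fun measurableSet_Ioo h2]
  exact betaIntegral_Ioo hs hr

theorem psi_power_ineq (a c x : ℝ) (ha : 0 < a) (hc : c < 0) (hx : 0 < x) :
    (Real.Gamma (a - c + 1) / Real.Gamma (-c) * tricomiPsi (a + 1) (c + 1) x) ^ (1 / (a + 1))
      < (Real.Gamma (a - c + 1) / Real.Gamma (1 - c) * tricomiPsi a c x) ^ (1 / a) := by
  set β : ℝ := c - a - 1 with hβ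
  have hβ0 : β ≤ 0 := by rw [hβ]; linarith
  have ha1 : (0:ℝ) < a + 1 := by linarith
  have haβ : a + β < 0 := by rw [hβ]; linarith
  have ha1β : (a + 1) + β < 0 := by rw [hβ]; linarith
  -- the log-functional
  set G : ℝ → ℝ := fun y => (a+1) * Real.log (Phi a β y) - a * Real.log (Phi (a+1) β y) with hG
  -- positivity of Phi for y ≥ 0
  have hPa : ∀ y : ℝ, 0 ≤ y → 0 < Phi a β y := fun y hy =>
    Phi_pos ha hβ0 hy (Or.inr haβ)
  have hPa1 : ∀ y : ℝ, 0 ≤ y → 0 < Phi (a+1) β y := fun y hy =>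
    Phi_pos (by linarith) hβ0 hy (Or.inr ha1β)
  have hPa2 : ∀ y : ℝ, 0 < y → 0 < Phi (a+2) β y := fun y hy =>
    Phi_pos (by linarith) hβ0 hy.le (Or.inl hy)
  -- derivative of G is positive on Ioi 0
  have hGderiv : ∀ y ∈ Set.Ioi (0:ℝ), HasDerivAt G
      ((a+1) * (-Phi (a+1) β y / Phi a β y) - a * (-Phi (a+2) β y / Phi (a+1) β y)) y := by
    intro y hy
    have hy0 : (0:ℝ) < y := hy
    have h1 := (Phi_hasDerivAt ha hβ0 hy0).log (ne_of_gt (hPa y hy0.le))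
    have h2 := (Phi_hasDerivAt (by linarith : (0:ℝ) < a + 1) hβ0 hy0).log
      (ne_of_gt (hPa1 y hy0.le))
    rw [show a + 1 + 1 = a + 2 by ring] at h2
    exact (h1.const_mul (a+1)).sub (h2.const_mul a)
  have hGpos : ∀ y ∈ Set.Ioi (0:ℝ), 0 <
      (a+1) * (-Phi (a+1) β y / Phi a β y) - a * (-Phi (a+2) β y / Phi (a+1) β y) := by
    intro y hy
    have hy0 : (0:ℝ) < y := hy
    have p0 := hPa y hy0.le
    have p1 := hPa1 y hy0.le
    have p2 := hPa2 y hy0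
    have ibp1 := Phi_IBP ha hβ0 hy0
    have ibp2 := Phi_IBP (by linarith : (0:ℝ) < a + 1) hβ0 hy0
    rw [show a + 1 + 1 = a + 2 by ring] at ibp2
    have cheb := Phi_chebyshev ha hβ0 hy0
    have key : a * (Phi a β y * Phi (a+2) β y) - (a+1) * (Phi (a+1) β y * Phi (a+1) β y)
        = (-β) * (Phi (a+1) (β-1) y * Phi (a+2) β y - Phi (a+2) (β-1) y * Phi (a+1) β y) := by
      linear_combination (Phi (a+1) β y) * ibp2 - (Phi (a+2) β y) * ibp1
    have hnegβ : 0 < -β := by rw [hβ]; linarith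
    have hkeypos : 0 < a * (Phi a β y * Phi (a+2) β y)
        - (a+1) * (Phi (a+1) β y * Phi (a+1) β y) := by
      rw [key]
      exact mul_pos hnegβ (by linarith)
    have expr : (a+1) * (-Phi (a+1) β y / Phi a β y) - a * (-Phi (a+2) β y / Phi (a+1) β y)
        = (a * (Phi a β y * Phi (a+2) β y) - (a+1) * (Phi (a+1) β y * Phi (a+1) β y))
          / (Phi a β y * Phi (a+1) β y) := by
      field_simp
      ring
    rw [expr]
    exact div_pos hkeypos (mul_pos p0 p1)
  have hGmono : StrictMonoOn G (Set.Ioi 0) := by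
    apply strictMonoOn_of_deriv_pos (convex_Ioi 0)
    · exact fun y hy => (hGderiv y hy).differentiableAt.continuousAt.continuousWithinAt
    · intro y hy
      rw [interior_Ioi] at hy
      rw [(hGderiv y hy).deriv]
      exact hGpos y hy
  -- limit at 0⁺
  have hGlim : Tendsto G (𝓝[>] (0:ℝ)) (𝓝 (G 0)) := by
    have t1 : Tendsto (fun y => Phi a β y) (𝓝[>] (0:ℝ)) (𝓝 (Phi a β 0)) :=
      Phi_tendsto_zero ha hβ0 haβ
    have t2 : Tendsto (fun y => Phi (a+1) β y) (𝓝[>] (0:ℝ)) (𝓝 (Phi (a+1) β 0)) :=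
      Phi_tendsto_zero (by linarith) hβ0 ha1β
    have l1 : Tendsto (fun y => Real.log (Phi a β y)) (𝓝[>] (0:ℝ)) (𝓝 (Real.log (Phi a β 0))) :=
      (Real.continuousAt_log (ne_of_gt (hPa 0 le_rfl))).tendsto.comp t1
    have l2 : Tendsto (fun y => Real.log (Phi (a+1) β y)) (𝓝[>] (0:ℝ))
        (𝓝 (Real.log (Phi (a+1) β 0))) :=
      (Real.continuousAt_log (ne_of_gt (hPa1 0 le_rfl))).tendsto.comp t2
    exact ((l1.const_mul (a+1)).sub (l2.const_mul a))
  -- G 0 < G x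
  have hG0x : G 0 < G x := by
    have hhalf : x/2 ∈ Set.Ioi (0:ℝ) := half_pos hx
    have h1 : G 0 ≤ G (x/2) := by
      refine le_of_tendsto hGlim ?_
      filter_upwards [Ioo_mem_nhdsGT_of_mem (Set.left_mem_Ico.2 (half_pos hx))] with y hy
      exact (hGmono hy.1 hhalf hy.2).le
    have h2 : G (x/2) < G x := hGmono hhalf hx (by linarith)
    exact lt_of_le_of_lt h1 h2
  -- Beta values at 0
  have hΓ1 : 0 < Real.Gamma (a - c + 1) := Real.Gamma_pos_of_pos (by linarith)
  have hΓ2 : 0 < Real.Gamma (-c) := Real.Gamma_pos_of_pos (by linarith)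
  have hΓ3 : 0 < Real.Gamma (1 - c) := Real.Gamma_pos_of_pos (by linarith)
  have hΓa : 0 < Real.Gamma a := Real.Gamma_pos_of_pos ha
  have hΓa1 : 0 < Real.Gamma (a+1) := Real.Gamma_pos_of_pos (by linarith)
  have hA0 : Phi a β 0 = Real.Gamma a * Real.Gamma (1-c) / Real.Gamma (a-c+1) := by
    have := Phi_zero_eq ha (show (0:ℝ) < 1 - c by linarith)
    rw [show -(a + (1-c)) = β by rw [hβ]; ring, show a + (1-c) = a - c + 1 by ring] at this
    exact this
  have hB0 : Phi (a+1) β 0 = Real.Gamma (a+1) * Real.Gamma (-c) / Real.Gamma (a-c+1) := by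
    have := Phi_zero_eq (show (0:ℝ) < a + 1 by linarith) (show (0:ℝ) < -c by linarith)
    rw [show -((a+1) + -c) = β by rw [hβ]; ring, show (a+1) + -c = a - c + 1 by ring] at this
    exact this
  -- identify tricomiPsi with Phi
  have hpsiA : tricomiPsi a c x = (1 / Real.Gamma a) * Phi a β x := rfl
  have hpsiB : tricomiPsi (a+1) (c+1) x = (1 / Real.Gamma (a+1)) * Phi (a+1) β x := by
    rw [tricomiPsi, Phi]
    simp only [show c + 1 - (a + 1) - 1 = β by rw [hβ]; ring]
  rw [hpsiA, hpsiB]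
  -- final log computation
  set PA := Phi a β x with hPAdef
  set PB := Phi (a+1) β x with hPBdef
  have hPApos : 0 < PA := hPa x hx.le
  have hPBpos : 0 < PB := hPa1 x hx.le
  have hbaseL : 0 < Real.Gamma (a-c+1) / Real.Gamma (-c) * (1 / Real.Gamma (a+1) * PB) := by
    positivity
  have hbaseR : 0 < Real.Gamma (a-c+1) / Real.Gamma (1-c) * (1 / Real.Gamma a * PA) := by
    positivity
  rw [Real.rpow_def_of_pos hbaseL, Real.rpow_def_of_pos hbaseR, Real.exp_lt_exp]
  have hlogL : Real.log (Real.Gamma (a-c+1) / Real.Gamma (-c) * (1 / Real.Gamma (a+1) * PB))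
      = Real.log (Real.Gamma (a-c+1)) - Real.log (Real.Gamma (-c))
        - Real.log (Real.Gamma (a+1)) + Real.log PB := by
    rw [show Real.Gamma (a-c+1) / Real.Gamma (-c) * (1 / Real.Gamma (a+1) * PB)
        = Real.Gamma (a-c+1) * PB / (Real.Gamma (-c) * Real.Gamma (a+1)) by field_simp,
      Real.log_div (by positivity) (by positivity), Real.log_mul (ne_of_gt hΓ1) (ne_of_gt hPBpos),
      Real.log_mul (ne_of_gt hΓ2) (ne_of_gt hΓa1)]
    ring
  have hlogR : Real.log (Real.Gamma (a-c+1) / Real.Gamma (1-c) * (1 / Real.Gamma a * PA))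
      = Real.log (Real.Gamma (a-c+1)) - Real.log (Real.Gamma (1-c))
        - Real.log (Real.Gamma a) + Real.log PA := by
    rw [show Real.Gamma (a-c+1) / Real.Gamma (1-c) * (1 / Real.Gamma a * PA)
        = Real.Gamma (a-c+1) * PA / (Real.Gamma (1-c) * Real.Gamma a) by field_simp,
      Real.log_div (by positivity) (by positivity), Real.log_mul (ne_of_gt hΓ1) (ne_of_gt hPApos),
      Real.log_mul (ne_of_gt hΓ3) (ne_of_gt hΓa)]
    ring
  rw [hlogL, hlogR, one_div (a+1), one_div a, ← div_eq_mul_inv, ← div_eq_mul_inv,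
    div_lt_div_iff₀ ha1 ha]
  -- expand G 0 < G x
  have hGx : G x = (a+1) * Real.log PA - a * Real.log PB := rfl
  have hG0 : G 0 = (a+1) * (Real.log (Real.Gamma a) + Real.log (Real.Gamma (1-c))
      - Real.log (Real.Gamma (a-c+1)))
      - a * (Real.log (Real.Gamma (a+1)) + Real.log (Real.Gamma (-c))
      - Real.log (Real.Gamma (a-c+1))) := by
    rw [hG]
    simp only [hA0, hB0]
    rw [Real.log_div (by positivity) (ne_of_gt hΓ1), Real.log_mul (ne_of_gt hΓa) (ne_of_gt hΓ3),
      Real.log_div (by positivity) (ne_of_gt hΓ1), Real.log_mul (ne_of_gt hΓa1) (ne_of_gt hΓ2)]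
  rw [hGx, hG0] at hG0x
  nlinarith [hG0x]
end

section
/- For a > 0, c < 0, and x > 0, the inequality 2 < ψ(a,c,x)/ψ(a+1,c+1,x) − (1/c)·(Γ(a−c+1)/Γ(1−c) · ψ(a,c,x))^{1/a} holds for the Tricomi confluent hypergeometric function ψ. -/
open MeasureTheory Real

section Aux
open Set Filter

/-- The auxiliary integral `Φ(b, s, x) = ∫_0^∞ (x+u)^(-s) u^b e^(-u) du`. -/
noncomputable def auxPhi (b s x : ℝ) : ℝ :=
  ∫ u in Set.Ioi (0:ℝ), (x + u) ^ (-s) * (u ^ b * Real.exp (-u))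

lemma auxIntOn_base {β r : ℝ} (hβ : -1 < β) (hr : 0 < r) :
    IntegrableOn (fun u : ℝ => u ^ β * Real.exp (-(r * u))) (Set.Ioi 0) := by
  have := integrableOn_rpow_mul_exp_neg_mul_rpow hβ (zero_lt_one' ℝ) hr
  refine this.congr_fun (fun u hu => ?_) measurableSet_Ioi
  beta_reduce; rw [Real.rpow_one, neg_mul]

lemma auxIntOn_base1 {β : ℝ} (hβ : -1 < β) :
    IntegrableOn (fun u : ℝ => u ^ β * Real.exp (-u)) (Set.Ioi 0) := by
  exact (auxIntOn_base hβ zero_lt_one).congr_fun (fun u _ => by beta_reduce; rw [one_mul])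
    measurableSet_Ioi

lemma auxPhi_integrand_contOn {b s x : ℝ} (hx : 0 ≤ x) :
    ContinuousOn (fun u : ℝ => (x + u) ^ (-s) * (u ^ b * Real.exp (-u))) (Set.Ioi 0) := by
  intro u hu
  have h1 : (0:ℝ) < x + u := by have := hu.out; linarith
  apply ContinuousWithinAt.mul
  · exact ((Real.continuousAt_rpow_const _ _ (Or.inl h1.ne')).comp
      (by continuity : Continuous fun u : ℝ => x + u).continuousAt).continuousWithinAt
  · apply ContinuousWithinAt.mul
    · exact ((Real.continuousAt_rpow_const _ _ (Or.inl (ne_of_gt hu.out))).comp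
        continuous_id.continuousAt).continuousWithinAt
    · exact (Real.continuous_exp.comp continuous_neg).continuousAt.continuousWithinAt

lemma auxPhi_integrableOn_pos {b s x : ℝ} (hb : -1 < b) (hs : 0 ≤ s) (hx : 0 < x) :
    IntegrableOn (fun u : ℝ => (x + u) ^ (-s) * (u ^ b * Real.exp (-u))) (Set.Ioi 0) := by
  have hbase : IntegrableOn (fun u : ℝ => x ^ (-s) * (u ^ b * Real.exp (-u))) (Set.Ioi 0) :=
    (auxIntOn_base1 hb).const_mul _
  refine hbase.mono'
    ((auxPhi_integrand_contOn hx.le).aestronglyMeasurable measurableSet_Ioi) ?_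
  filter_upwards [self_mem_ae_restrict measurableSet_Ioi] with u hu
  have hu0 : (0:ℝ) < u := hu
  have h1 : (0:ℝ) ≤ (x + u) ^ (-s) * (u ^ b * Real.exp (-u)) := by positivity
  rw [Real.norm_eq_abs, abs_of_nonneg h1]
  have h2 : (x + u) ^ (-s) ≤ x ^ (-s) :=
    Real.rpow_le_rpow_of_nonpos hx (by linarith) (by linarith)
  have h3 : (0:ℝ) ≤ u ^ b * Real.exp (-u) := by positivity
  exact mul_le_mul_of_nonneg_right h2 h3

lemma auxPhi_integrableOn_zero {b s x : ℝ} (hbs : -1 < b - s) (hs : 0 ≤ s) (hx : 0 ≤ x) :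
    IntegrableOn (fun u : ℝ => (x + u) ^ (-s) * (u ^ b * Real.exp (-u))) (Set.Ioi 0) := by
  refine (auxIntOn_base1 hbs).mono'
    ((auxPhi_integrand_contOn hx).aestronglyMeasurable measurableSet_Ioi) ?_
  filter_upwards [self_mem_ae_restrict measurableSet_Ioi] with u hu
  have hu0 : (0:ℝ) < u := hu
  have h1 : (0:ℝ) ≤ (x + u) ^ (-s) * (u ^ b * Real.exp (-u)) := by
    have : (0:ℝ) < x + u := by linarith
    positivity
  rw [Real.norm_eq_abs, abs_of_nonneg h1]
  have h2 : (x + u) ^ (-s) ≤ u ^ (-s) :=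
    Real.rpow_le_rpow_of_nonpos hu0 (by linarith) (by linarith)
  have h3 : (0:ℝ) ≤ u ^ b * Real.exp (-u) := by positivity
  calc (x + u) ^ (-s) * (u ^ b * Real.exp (-u))
      ≤ u ^ (-s) * (u ^ b * Real.exp (-u)) := mul_le_mul_of_nonneg_right h2 h3
    _ = u ^ (b - s) * Real.exp (-u) := by
        rw [show b - s = -s + b by ring, Real.rpow_add hu0]; ring

lemma auxPhi_pos {b s x : ℝ}
    (hint : IntegrableOn (fun u : ℝ => (x + u) ^ (-s) * (u ^ b * Real.exp (-u))) (Set.Ioi 0))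
    (hx : 0 ≤ x) : 0 < auxPhi b s x := by
  rw [auxPhi]
  have hpos : ∀ u ∈ Set.Ioi (0:ℝ), 0 < (x + u) ^ (-s) * (u ^ b * Real.exp (-u)) := by
    intro u hu
    have hu0 : (0:ℝ) < u := hu
    have hxu : (0:ℝ) < x + u := by linarith
    positivity
  have hnn : 0 ≤ᵐ[volume.restrict (Set.Ioi (0:ℝ))]
      fun u => (x + u) ^ (-s) * (u ^ b * Real.exp (-u)) := by
    filter_upwards [self_mem_ae_restrict measurableSet_Ioi] with u hu
    exact (hpos u hu).le
  rw [setIntegral_pos_iff_support_of_nonneg_ae hnn hint]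
  have hsub : Set.Ioi (0:ℝ) ⊆
      (Function.support fun u => (x + u) ^ (-s) * (u ^ b * Real.exp (-u))) ∩ Set.Ioi 0 :=
    fun u hu => ⟨ne_of_gt (hpos u hu), hu⟩
  refine lt_of_lt_of_le ?_ (measure_mono hsub)
  rw [Real.volume_Ioi]
  exact ENNReal.zero_lt_top

lemma auxPhi_zero_eq_Gamma {b s : ℝ} (hbs : 0 < b - s + 1) :
    auxPhi b s 0 = Real.Gamma (b - s + 1) := by
  rw [auxPhi, Real.Gamma_eq_integral hbs]
  refine setIntegral_congr_fun measurableSet_Ioi (fun u hu => ?_)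
  have hu0 : (0:ℝ) < u := hu
  rw [zero_add, show b - s + 1 - 1 = -s + b by ring, Real.rpow_add hu0]
  ring

/-- Fubini bridge: the `ψ`-type integral equals a constant times `auxPhi`. -/
lemma bridge {b s x : ℝ} (hb : 0 < b) (hs : 0 < s) (hx : 0 < x) :
    ∫ t in Set.Ioi (0:ℝ), Real.exp (-x * t) * t ^ (s - 1) * (1 + t) ^ (-(b+1))
      = (Real.Gamma s / Real.Gamma (b+1)) * auxPhi b s x := by
  have hb1 : (0:ℝ) < b + 1 := by linarith
  have hb' : (-1:ℝ) < b := by linarith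
  set G : ℝ → ℝ → ℝ :=
    fun t u => t ^ (s-1) * u ^ b * Real.exp (-((x+u)*t)) * Real.exp (-u) with hG
  have hGsplit : ∀ t u : ℝ,
      G t u = (t ^ (s-1) * Real.exp (-x*t)) * (u ^ b * Real.exp (-((1+t)*u))) := by
    intro t u
    have key : Real.exp (-((x+u)*t)) * Real.exp (-u)
        = Real.exp (-x*t) * Real.exp (-((1+t)*u)) := by
      rw [← Real.exp_add, ← Real.exp_add]; congr 1; ring
    rw [hG]
    linear_combination (t ^ (s-1) * u ^ b) * key
  have h_inner_u : ∀ t ∈ Set.Ioi (0:ℝ), (∫ u in Set.Ioi (0:ℝ), G t u)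
      = Real.Gamma (b+1) * (Real.exp (-x*t) * t ^ (s-1) * (1+t) ^ (-(b+1))) := by
    intro t ht
    have h1t : (0:ℝ) < 1 + t := by have := ht.out; linarith
    have hval := Real.integral_rpow_mul_exp_neg_mul_Ioi hb1 h1t
    simp only [add_sub_cancel_right] at hval
    rw [one_div, Real.inv_rpow h1t.le, ← Real.rpow_neg h1t.le] at hval
    calc (∫ u in Set.Ioi (0:ℝ), G t u)
        = ∫ u in Set.Ioi (0:ℝ),
            (t ^ (s-1) * Real.exp (-x*t)) * (u ^ b * Real.exp (-((1+t)*u))) := by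
          exact setIntegral_congr_fun measurableSet_Ioi (fun u _ => hGsplit t u)
      _ = (t ^ (s-1) * Real.exp (-x*t)) *
            ∫ u in Set.Ioi (0:ℝ), u ^ b * Real.exp (-((1+t)*u)) :=
          MeasureTheory.integral_const_mul _ _
      _ = Real.Gamma (b+1) * (Real.exp (-x*t) * t ^ (s-1) * (1+t) ^ (-(b+1))) := by
          rw [hval]; ring
  have h_inner_t : ∀ u ∈ Set.Ioi (0:ℝ), (∫ t in Set.Ioi (0:ℝ), G t u)
      = Real.Gamma s * ((x+u) ^ (-s) * (u ^ b * Real.exp (-u))) := by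
    intro u hu
    have hxu : (0:ℝ) < x + u := by have := hu.out; linarith
    have hval := Real.integral_rpow_mul_exp_neg_mul_Ioi hs hxu
    rw [one_div, Real.inv_rpow hxu.le, ← Real.rpow_neg hxu.le] at hval
    calc (∫ t in Set.Ioi (0:ℝ), G t u)
        = ∫ t in Set.Ioi (0:ℝ),
            (u ^ b * Real.exp (-u)) * (t ^ (s-1) * Real.exp (-((x+u)*t))) := by
          refine setIntegral_congr_fun measurableSet_Ioi (fun t _ => ?_)
          rw [hG]; ring
      _ = (u ^ b * Real.exp (-u)) *
            ∫ t in Set.Ioi (0:ℝ), t ^ (s-1) * Real.exp (-((x+u)*t)) :=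
          MeasureTheory.integral_const_mul _ _
      _ = Real.Gamma s * ((x+u) ^ (-s) * (u ^ b * Real.exp (-u))) := by
          rw [hval]; ring
  -- integrability of the ψ-integrand
  have hψcont : ContinuousOn
      (fun t : ℝ => Real.exp (-x*t) * t ^ (s-1) * (1+t) ^ (-(b+1))) (Set.Ioi 0) := by
    intro t ht
    have ht0 : (0:ℝ) < t := ht
    have h1t : (0:ℝ) < 1 + t := by linarith
    have c1 : ContinuousAt (fun t : ℝ => Real.exp (-x*t)) t :=
      (Real.continuous_exp.comp (continuous_const.mul continuous_id)).continuousAt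
    have c2 : ContinuousAt (fun t : ℝ => t ^ (s-1)) t :=
      Real.continuousAt_rpow_const _ _ (Or.inl ht0.ne')
    have c3 : ContinuousAt (fun t : ℝ => (1+t) ^ (-(b+1))) t :=
      (Real.continuousAt_rpow_const _ _ (Or.inl h1t.ne')).comp
        ((continuous_const.add continuous_id).continuousAt)
    exact ((c1.mul c2).mul c3).continuousWithinAt
  have hψint : IntegrableOn
      (fun t : ℝ => Real.exp (-x*t) * t ^ (s-1) * (1+t) ^ (-(b+1))) (Set.Ioi 0) := by
    refine (auxIntOn_base (by linarith : (-1:ℝ) < s - 1) hx).mono'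
      (hψcont.aestronglyMeasurable measurableSet_Ioi) ?_
    filter_upwards [self_mem_ae_restrict measurableSet_Ioi] with t ht
    have ht0 : (0:ℝ) < t := ht
    have h1t : (0:ℝ) < 1 + t := by linarith
    have hnn : (0:ℝ) ≤ Real.exp (-x*t) * t ^ (s-1) * (1+t) ^ (-(b+1)) := by positivity
    rw [Real.norm_eq_abs, abs_of_nonneg hnn]
    have h1 : (1+t) ^ (-(b+1)) ≤ 1 :=
      Real.rpow_le_one_of_one_le_of_nonpos (by linarith) (by linarith)
    calc Real.exp (-x*t) * t ^ (s-1) * (1+t) ^ (-(b+1))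
        ≤ Real.exp (-x*t) * t ^ (s-1) * 1 := by
          have : (0:ℝ) ≤ Real.exp (-x*t) * t ^ (s-1) := by positivity
          exact mul_le_mul_of_nonneg_left h1 this
      _ = t ^ (s-1) * Real.exp (-(x*t)) := by rw [neg_mul]; ring
  -- integrability on the product space
  have hGmeas : AEStronglyMeasurable (Function.uncurry G)
      ((volume.restrict (Set.Ioi 0)).prod (volume.restrict (Set.Ioi 0))) := by
    apply Measurable.aestronglyMeasurable
    show Measurable fun p : ℝ × ℝ =>
      p.1 ^ (s-1) * p.2 ^ b * Real.exp (-((x+p.2)*p.1)) * Real.exp (-p.2)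
    fun_prop
  have hGint : Integrable (Function.uncurry G)
      ((volume.restrict (Set.Ioi 0)).prod (volume.restrict (Set.Ioi 0))) := by
    rw [MeasureTheory.integrable_prod_iff hGmeas]
    constructor
    · filter_upwards [self_mem_ae_restrict measurableSet_Ioi] with t ht
      have h1t : (0:ℝ) < 1 + t := by have := ht.out; linarith
      exact MeasureTheory.IntegrableOn.congr_fun ((auxIntOn_base hb' h1t).const_mul _)
        (fun u _ => (hGsplit t u).symm) measurableSet_Ioi
    · have hnormval : ∀ t ∈ Set.Ioi (0:ℝ),
          (∫ u in Set.Ioi (0:ℝ), ‖G t u‖)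
            = Real.Gamma (b+1) * (Real.exp (-x*t) * t ^ (s-1) * (1+t) ^ (-(b+1))) := by
        intro t ht
        have ht0 : (0:ℝ) < t := ht
        rw [← h_inner_u t ht]
        refine setIntegral_congr_fun measurableSet_Ioi (fun u hu => ?_)
        have hu0 : (0:ℝ) < u := hu
        have : (0:ℝ) ≤ G t u := by rw [hG]; positivity
        rw [Real.norm_eq_abs, abs_of_nonneg this]
      refine ((hψint.const_mul (Real.Gamma (b+1))).congr ?_)
      filter_upwards [self_mem_ae_restrict measurableSet_Ioi] with t ht
      exact (hnormval t ht).symm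
  have hswap := MeasureTheory.integral_integral_swap hGint
  have lhs_eq : (∫ t in Set.Ioi (0:ℝ), ∫ u in Set.Ioi (0:ℝ), G t u)
      = Real.Gamma (b+1) *
        ∫ t in Set.Ioi (0:ℝ), Real.exp (-x*t) * t ^ (s-1) * (1+t) ^ (-(b+1)) := by
    rw [setIntegral_congr_fun measurableSet_Ioi h_inner_u]
    exact MeasureTheory.integral_const_mul _ _
  have rhs_eq : (∫ u in Set.Ioi (0:ℝ), ∫ t in Set.Ioi (0:ℝ), G t u)
      = Real.Gamma s * auxPhi b s x := by
    rw [setIntegral_congr_fun measurableSet_Ioi h_inner_t]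
    exact MeasureTheory.integral_const_mul _ _
  rw [lhs_eq, rhs_eq] at hswap
  have hΓ : (0:ℝ) < Real.Gamma (b+1) := Real.Gamma_pos_of_pos hb1
  rw [div_mul_eq_mul_div, eq_div_iff hΓ.ne']
  linarith [hswap]

lemma auxPhi_hasDerivAt {b s x : ℝ} (hb : -1 < b) (hs : 0 ≤ s) (hx : 0 < x) :
    HasDerivAt (fun y => auxPhi b s y) (-s * auxPhi b (s+1) x) x := by
  have hx2 : (0:ℝ) < x / 2 := by linarith
  have key := hasDerivAt_integral_of_dominated_loc_of_deriv_le (μ := volume.restrict (Set.Ioi 0))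
    (F := fun y u => (y + u) ^ (-s) * (u ^ b * Real.exp (-u)))
    (F' := fun y u => (-s) * ((y + u) ^ (-(s+1)) * (u ^ b * Real.exp (-u))))
    (x₀ := x) (s := Metric.ball x (x / 2))
    (bound := fun u => s * ((x / 2 + u) ^ (-(s+1)) * (u ^ b * Real.exp (-u)))) (Metric.ball_mem_nhds x hx2)
    ?_ ?_ ?_ ?_ ?_ ?_
  · have h2 : ∫ u in Set.Ioi (0:ℝ), (-s) * ((x + u) ^ (-(s+1)) * (u ^ b * Real.exp (-u)))
        = -s * auxPhi b (s+1) x := by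
      rw [auxPhi, MeasureTheory.integral_const_mul]
    rw [h2] at key
    exact key.2
  · filter_upwards [eventually_gt_nhds (by linarith : x / 2 < x)] with y hy
    exact (auxPhi_integrand_contOn (by linarith)).aestronglyMeasurable measurableSet_Ioi
  · exact auxPhi_integrableOn_pos hb hs hx
  · exact ((auxPhi_integrand_contOn (s := s + 1) (by linarith : (0:ℝ) ≤ x)).aestronglyMeasurable
      measurableSet_Ioi).const_mul _
  · filter_upwards [self_mem_ae_restrict measurableSet_Ioi] with u hu
    intro y hy
    have hu0 : (0:ℝ) < u := hu
    have hy2 : x / 2 < y := by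
      have := abs_lt.mp (mem_ball_iff_norm.mp hy)
      linarith [this.1]
    have hyu : (0:ℝ) < y + u := by linarith
    have h1 : (y + u) ^ (-(s+1)) ≤ (x / 2 + u) ^ (-(s+1)) :=
      Real.rpow_le_rpow_of_nonpos (by linarith) (by linarith) (by linarith)
    have h3 : (0:ℝ) ≤ u ^ b * Real.exp (-u) := by positivity
    have h4 : (0:ℝ) ≤ (y + u) ^ (-(s+1)) := Real.rpow_nonneg hyu.le _
    rw [Real.norm_eq_abs, abs_mul, abs_neg, abs_of_nonneg hs,
      abs_of_nonneg (by positivity : (0:ℝ) ≤ (y + u) ^ (-(s+1)) * (u ^ b * Real.exp (-u)))]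
    exact mul_le_mul_of_nonneg_left (mul_le_mul_of_nonneg_right h1 h3) hs
  · exact (auxPhi_integrableOn_pos hb (by linarith) hx2).const_mul _
  · filter_upwards [self_mem_ae_restrict measurableSet_Ioi] with u hu
    intro y hy
    have hu0 : (0:ℝ) < u := hu
    have hy2 : x / 2 < y := by
      have := abs_lt.mp (mem_ball_iff_norm.mp hy)
      linarith [this.1]
    have hyu : (0:ℝ) < y + u := by linarith
    have hd : HasDerivAt (fun z : ℝ => (z + u) ^ (-s)) ((-s) * (y + u) ^ (-(s+1))) y := by
      have h0 := Real.hasDerivAt_rpow_const (x := y + u) (p := -s) (Or.inl hyu.ne')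
      have h1 := h0.comp y ((hasDerivAt_id y).add_const u)
      simpa [Function.comp_def, show -s - 1 = -(s+1) by ring] using h1
    simpa [mul_assoc] using hd.mul_const (u ^ b * Real.exp (-u))

lemma auxPhi_continuousWithinAt {b s : ℝ} (hbs : -1 < b - s) (hs : 0 ≤ s) :
    ContinuousWithinAt (fun y => auxPhi b s y) (Set.Ici 0) 0 := by
  apply MeasureTheory.continuousWithinAt_of_dominated
    (bound := fun u : ℝ => u ^ (b - s) * Real.exp (-u))
  · filter_upwards [self_mem_nhdsWithin] with y (hy : (0:ℝ) ≤ y)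
    exact (auxPhi_integrand_contOn hy).aestronglyMeasurable measurableSet_Ioi
  · filter_upwards [self_mem_nhdsWithin] with y (hy : (0:ℝ) ≤ y)
    filter_upwards [self_mem_ae_restrict measurableSet_Ioi] with u hu
    have hu0 : (0:ℝ) < u := hu
    have h1 : (0:ℝ) ≤ (y + u) ^ (-s) * (u ^ b * Real.exp (-u)) := by
      have : (0:ℝ) < y + u := by linarith
      positivity
    rw [Real.norm_eq_abs, abs_of_nonneg h1]
    have h2 : (y + u) ^ (-s) ≤ u ^ (-s) :=
      Real.rpow_le_rpow_of_nonpos hu0 (by linarith) (by linarith)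
    have h3 : (0:ℝ) ≤ u ^ b * Real.exp (-u) := by positivity
    calc (y + u) ^ (-s) * (u ^ b * Real.exp (-u))
        ≤ u ^ (-s) * (u ^ b * Real.exp (-u)) := mul_le_mul_of_nonneg_right h2 h3
      _ = u ^ (b - s) * Real.exp (-u) := by
          rw [show b - s = -s + b by ring, Real.rpow_add hu0]; ring
  · exact auxIntOn_base1 hbs
  · filter_upwards [self_mem_ae_restrict measurableSet_Ioi] with u hu
    have hu0 : (0:ℝ) < u := hu
    have hcont : ContinuousAt (fun y : ℝ => (y + u) ^ (-s) * (u ^ b * Real.exp (-u))) 0 := by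
      apply ContinuousAt.mul ?_ continuousAt_const
      exact (Real.continuousAt_rpow_const _ _ (Or.inl (by simpa using hu0.ne')))
        |>.comp ((continuous_id.add continuous_const).continuousAt)
    exact hcont.continuousWithinAt

/-- Strict Cauchy–Schwarz for the `auxPhi` family. -/
lemma auxPhi_sq_lt {b s x : ℝ} (hb : -1 < b) (hs : 0 ≤ s) (hx : 0 < x) :
    auxPhi b (s+1) x ^ 2 < auxPhi b s x * auxPhi b (s+2) x := by
  have hiA : IntegrableOn (fun u : ℝ => (x + u) ^ (-s) * (u ^ b * Real.exp (-u)))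
      (Set.Ioi 0) := auxPhi_integrableOn_pos hb hs hx
  have hiB : IntegrableOn (fun u : ℝ => (x + u) ^ (-(s+1)) * (u ^ b * Real.exp (-u)))
      (Set.Ioi 0) := auxPhi_integrableOn_pos hb (by linarith) hx
  have hiC : IntegrableOn (fun u : ℝ => (x + u) ^ (-(s+2)) * (u ^ b * Real.exp (-u)))
      (Set.Ioi 0) := auxPhi_integrableOn_pos hb (by linarith) hx
  have hA : 0 < auxPhi b s x := auxPhi_pos hiA hx.le
  have hB : 0 < auxPhi b (s+1) x := auxPhi_pos hiB hx.le
  have hC : 0 < auxPhi b (s+2) x := auxPhi_pos hiC hx.le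
  set l : ℝ := auxPhi b (s+1) x / auxPhi b (s+2) x with hl
  have hl0 : 0 < l := div_pos hB hC
  -- the quadratic function
  set f : ℝ → ℝ := fun u =>
    ((x + u) ^ (-(s/2)) - l * (x + u) ^ (-((s+2)/2))) ^ 2 * (u ^ b * Real.exp (-u)) with hf
  have hexp : ∀ u ∈ Set.Ioi (0:ℝ), f u
      = (x + u) ^ (-s) * (u ^ b * Real.exp (-u))
        - (2 * l) * ((x + u) ^ (-(s+1)) * (u ^ b * Real.exp (-u)))
        + l ^ 2 * ((x + u) ^ (-(s+2)) * (u ^ b * Real.exp (-u))) := by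
    intro u hu
    have hu0 : (0:ℝ) < u := hu
    have hxu : (0:ℝ) < x + u := by linarith
    have e1 : (x+u) ^ (-(s/2)) * (x+u) ^ (-(s/2)) = (x+u) ^ (-s) := by
      rw [← Real.rpow_add hxu]; congr 1; ring
    have e2 : (x+u) ^ (-(s/2)) * (x+u) ^ (-((s+2)/2)) = (x+u) ^ (-(s+1)) := by
      rw [← Real.rpow_add hxu]; congr 1; ring
    have e3 : (x+u) ^ (-((s+2)/2)) * (x+u) ^ (-((s+2)/2)) = (x+u) ^ (-(s+2)) := by
      rw [← Real.rpow_add hxu]; congr 1; ring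
    rw [hf]
    linear_combination (u ^ b * Real.exp (-u)) * e1
      - 2 * l * (u ^ b * Real.exp (-u)) * e2 + l ^ 2 * (u ^ b * Real.exp (-u)) * e3
  have hiB2 : IntegrableOn (fun u : ℝ => 2 * l * ((x+u) ^ (-(s+1)) * (u ^ b * Real.exp (-u))))
      (Set.Ioi 0) := hiB.const_mul _
  have hiC2 : IntegrableOn (fun u : ℝ => l ^ 2 * ((x+u) ^ (-(s+2)) * (u ^ b * Real.exp (-u))))
      (Set.Ioi 0) := hiC.const_mul _
  have hiAB : IntegrableOn (fun u : ℝ => (x+u) ^ (-s) * (u ^ b * Real.exp (-u))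
      - 2 * l * ((x+u) ^ (-(s+1)) * (u ^ b * Real.exp (-u)))) (Set.Ioi 0) := hiA.sub hiB2
  have hfint : IntegrableOn f (Set.Ioi 0) :=
    MeasureTheory.IntegrableOn.congr_fun (hiAB.add hiC2)
      (fun u hu => (hexp u hu).symm) measurableSet_Ioi
  have hI : ∫ u in Set.Ioi (0:ℝ), f u
      = auxPhi b s x - 2 * l * auxPhi b (s+1) x + l ^ 2 * auxPhi b (s+2) x := by
    rw [setIntegral_congr_fun measurableSet_Ioi hexp,
      MeasureTheory.integral_add hiAB hiC2,
      MeasureTheory.integral_sub hiA hiB2,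
      MeasureTheory.integral_const_mul, MeasureTheory.integral_const_mul]
    rw [auxPhi, auxPhi, auxPhi]
  have hIpos : 0 < ∫ u in Set.Ioi (0:ℝ), f u := by
    have hnn : 0 ≤ᵐ[volume.restrict (Set.Ioi (0:ℝ))] f := by
      filter_upwards [self_mem_ae_restrict measurableSet_Ioi] with u hu
      have hu0 : (0:ℝ) < u := hu
      have : (0:ℝ) ≤ u ^ b * Real.exp (-u) := by positivity
      exact mul_nonneg (sq_nonneg _) this
    rw [setIntegral_pos_iff_support_of_nonneg_ae hnn hfint]
    have hsub : Set.Ioi (max 0 l) ⊆ Function.support f ∩ Set.Ioi 0 := by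
      intro u hu
      have hu0 : (0:ℝ) < u := lt_of_le_of_lt (le_max_left 0 l) hu
      have hul : l < u := lt_of_le_of_lt (le_max_right 0 l) hu
      have hxu : (0:ℝ) < x + u := by linarith
      refine ⟨?_, hu0⟩
      rw [hf]
      intro hzero
      have hq : (0:ℝ) < u ^ b * Real.exp (-u) := by positivity
      have hsq : ((x + u) ^ (-(s/2)) - l * (x + u) ^ (-((s+2)/2))) = 0 := by
        have := mul_eq_zero.mp hzero
        rcases this with h | h
        · exact pow_eq_zero_iff (n := 2) (by norm_num) |>.mp h
        · exact absurd h hq.ne'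
      have hr2 : (0:ℝ) < (x + u) ^ (-((s+2)/2)) := Real.rpow_pos_of_pos hxu _
      have hleq : l = (x + u) ^ (-(s/2)) / (x + u) ^ (-((s+2)/2)) := by
        rw [eq_div_iff hr2.ne']
        linarith
      rw [← Real.rpow_sub hxu] at hleq
      have : l = x + u := by
        rw [hleq, show -(s/2) - -((s+2)/2) = 1 by ring, Real.rpow_one]
      linarith
    refine lt_of_lt_of_le ?_ (measure_mono hsub)
    rw [Real.volume_Ioi]
    exact ENNReal.zero_lt_top
  rw [hI] at hIpos
  have h2 : 0 < auxPhi b s x - auxPhi b (s+1) x ^ 2 / auxPhi b (s+2) x := by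
    have : 2 * l * auxPhi b (s+1) x - l ^ 2 * auxPhi b (s+2) x
        = auxPhi b (s+1) x ^ 2 / auxPhi b (s+2) x := by
      rw [hl]; field_simp; ring
    linarith
  have h3 : auxPhi b (s+1) x ^ 2 / auxPhi b (s+2) x < auxPhi b s x := by linarith
  calc auxPhi b (s+1) x ^ 2
      = auxPhi b (s+1) x ^ 2 / auxPhi b (s+2) x * auxPhi b (s+2) x := by
        field_simp
    _ < auxPhi b s x * auxPhi b (s+2) x := by
        exact mul_lt_mul_of_pos_right h3 hC

/-- The core inequality, via monotonicity of
`x ↦ (a+1) log Φ(a,x) - a log Φ(a+1,x)`. -/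
lemma core_ineq {b a x : ℝ} (ha : 0 < a) (hab : a < b) (hx : 0 < x) :
    (auxPhi b (a+1) x / auxPhi b (a+1) 0) ^ a
      < (auxPhi b a x / auxPhi b a 0) ^ (a+1) := by
  have hb : -1 < b := by linarith
  have haux : ∀ s : ℝ, 0 ≤ s → ∀ y : ℝ, 0 < y → 0 < auxPhi b s y := fun s hs y hy =>
    auxPhi_pos (auxPhi_integrableOn_pos hb hs hy) hy.le
  have hA0 : 0 < auxPhi b a 0 :=
    auxPhi_pos (auxPhi_integrableOn_zero (by linarith) ha.le le_rfl) le_rfl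
  have hA10 : 0 < auxPhi b (a+1) 0 :=
    auxPhi_pos (auxPhi_integrableOn_zero (by linarith) (by linarith) le_rfl) le_rfl
  have hAx : 0 < auxPhi b a x := haux a ha.le x hx
  have hA1x : 0 < auxPhi b (a+1) x := haux (a+1) (by linarith) x hx
  set L : ℝ → ℝ := fun y => (a+1) * Real.log (auxPhi b a y) - a * Real.log (auxPhi b (a+1) y)
    with hL
  have hLdiff : ∀ y : ℝ, 0 < y → HasDerivAt L
      ((a+1) * ((-a * auxPhi b (a+1) y) / auxPhi b a y)
        - a * ((-(a+1) * auxPhi b (a+2) y) / auxPhi b (a+1) y)) y := by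
    intro y hy
    have h1 := auxPhi_hasDerivAt (s := a) hb ha.le hy
    have h2 := auxPhi_hasDerivAt (s := a+1) hb (by linarith) hy
    rw [show a+1+1 = a+2 by ring] at h2
    exact ((h1.log (haux a ha.le y hy).ne').const_mul (a+1)).sub
      ((h2.log (haux (a+1) (by linarith) y hy).ne').const_mul a)
  have hcont : ContinuousOn L (Set.Ici 0) := by
    intro y hy
    rcases eq_or_lt_of_le (Set.mem_Ici.mp hy) with h | h
    · subst h
      apply ContinuousWithinAt.sub
      · exact continuousWithinAt_const.mul
          ((Real.continuousAt_log hA0.ne').comp_continuousWithinAt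
            (auxPhi_continuousWithinAt (by linarith) ha.le))
      · exact continuousWithinAt_const.mul
          ((Real.continuousAt_log hA10.ne').comp_continuousWithinAt
            (auxPhi_continuousWithinAt (by linarith) (by linarith)))
    · exact (hLdiff y h).continuousAt.continuousWithinAt
  have hmono : StrictMonoOn L (Set.Ici 0) := by
    refine strictMonoOn_of_deriv_pos (convex_Ici 0) hcont ?_
    rw [interior_Ici]
    intro y hy
    have hy0 : (0:ℝ) < y := hy
    rw [(hLdiff y hy0).deriv]
    have hB : 0 < auxPhi b (a+1) y := haux (a+1) (by linarith) y hy0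
    have hA : 0 < auxPhi b a y := haux a ha.le y hy0
    have hC : 0 < auxPhi b (a+2) y := haux (a+2) (by linarith) y hy0
    have hcs := auxPhi_sq_lt (s := a) hb ha.le hy0
    have key : auxPhi b (a+1) y / auxPhi b a y < auxPhi b (a+2) y / auxPhi b (a+1) y := by
      rw [div_lt_div_iff₀ hA hB]
      nlinarith [hcs]
    have hD : (a+1) * ((-a * auxPhi b (a+1) y) / auxPhi b a y)
        - a * ((-(a+1) * auxPhi b (a+2) y) / auxPhi b (a+1) y)
        = a * (a+1) * (auxPhi b (a+2) y / auxPhi b (a+1) y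
            - auxPhi b (a+1) y / auxPhi b a y) := by
      field_simp
      ring
    rw [hD]
    have := sub_pos.mpr key
    positivity
  have hlt : L 0 < L x := hmono Set.self_mem_Ici (Set.mem_Ici.mpr hx.le) hx
  rw [hL] at hlt
  simp only at hlt
  rw [Real.rpow_def_of_pos (div_pos hA1x hA10), Real.rpow_def_of_pos (div_pos hAx hA0),
    Real.exp_lt_exp, Real.log_div hA1x.ne' hA10.ne', Real.log_div hAx.ne' hA0.ne']
  nlinarith [hlt]

end Aux

theorem psi_two_lt (a c x : ℝ) (ha : 0 < a) (hc : c < 0) (hx : 0 < x) :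
    2 < tricomiPsi a c x / tricomiPsi (a + 1) (c + 1) x
      - (1 / c) * (Real.Gamma (a - c + 1) / Real.Gamma (1 - c) * tricomiPsi a c x) ^ (1 / a) := by
  have hb : 0 < a - c := by linarith
  have hab : a < a - c := by linarith
  have hc0 : (0:ℝ) < -c := by linarith
  have hΓa : 0 < Real.Gamma a := Real.Gamma_pos_of_pos ha
  have hΓa1 : 0 < Real.Gamma (a+1) := Real.Gamma_pos_of_pos (by linarith)
  have hΓb1 : 0 < Real.Gamma (a - c + 1) := Real.Gamma_pos_of_pos (by linarith)
  have h1 : tricomiPsi a c x = auxPhi (a-c) a x / Real.Gamma (a - c + 1) := by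
    rw [tricomiPsi, show c - a - 1 = -((a-c)+1) by ring, bridge hb ha hx]
    field_simp
  have h2 : tricomiPsi (a+1) (c+1) x = auxPhi (a-c) (a+1) x / Real.Gamma (a - c + 1) := by
    rw [tricomiPsi, show c + 1 - (a + 1) - 1 = -((a-c)+1) by ring,
      bridge hb (by linarith : (0:ℝ) < a+1) hx]
    field_simp
  have hΦax : 0 < auxPhi (a-c) a x :=
    auxPhi_pos (auxPhi_integrableOn_pos (by linarith) ha.le hx) hx.le
  have hΦa1x : 0 < auxPhi (a-c) (a+1) x :=
    auxPhi_pos (auxPhi_integrableOn_pos (by linarith) (by linarith) hx) hx.le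
  have hΦa0 : 0 < auxPhi (a-c) a 0 :=
    auxPhi_pos (auxPhi_integrableOn_zero (by linarith) ha.le le_rfl) le_rfl
  have hΦa10 : 0 < auxPhi (a-c) (a+1) 0 :=
    auxPhi_pos (auxPhi_integrableOn_zero (by linarith) (by linarith) le_rfl) le_rfl
  have hG1 : auxPhi (a-c) a 0 = Real.Gamma (1 - c) := by
    rw [auxPhi_zero_eq_Gamma (by linarith : (0:ℝ) < (a-c) - a + 1)]
    congr 1; ring
  have hG2 : auxPhi (a-c) (a+1) 0 = Real.Gamma (-c) := by
    rw [auxPhi_zero_eq_Gamma (by linarith : (0:ℝ) < (a-c) - (a+1) + 1)]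
    congr 1; ring
  have hGrec : Real.Gamma (1 - c) = (-c) * Real.Gamma (-c) := by
    rw [show (1:ℝ) - c = -c + 1 by ring, Real.Gamma_add_one hc0.ne']
  have core := core_ineq (b := a - c) ha hab hx
  -- simplify the goal
  rw [h1, h2]
  have hr1 : auxPhi (a-c) a x / Real.Gamma (a-c+1) / (auxPhi (a-c) (a+1) x / Real.Gamma (a-c+1))
      = auxPhi (a-c) a x / auxPhi (a-c) (a+1) x := by
    field_simp
  have hr2 : Real.Gamma (a-c+1) / Real.Gamma (1-c) * (auxPhi (a-c) a x / Real.Gamma (a-c+1))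
      = auxPhi (a-c) a x / auxPhi (a-c) a 0 := by
    rw [hG1]
    calc Real.Gamma (a-c+1) / Real.Gamma (1-c) * (auxPhi (a-c) a x / Real.Gamma (a-c+1))
        = auxPhi (a-c) a x * (Real.Gamma (a-c+1) / Real.Gamma (a-c+1)) / Real.Gamma (1-c) := by
          ring
      _ = auxPhi (a-c) a x / Real.Gamma (1-c) := by rw [div_self hΓb1.ne', mul_one]
  rw [hr1, hr2]
  set Y : ℝ := auxPhi (a-c) a x / auxPhi (a-c) a 0 with hY
  have hYpos : 0 < Y := div_pos hΦax hΦa0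
  set K : ℝ := Y ^ (1/a) with hK
  have hKpos : 0 < K := Real.rpow_pos_of_pos hYpos _
  -- from core_ineq: Φa1x/Φa10 < Y * K
  have t1 : auxPhi (a-c) (a+1) x / auxPhi (a-c) (a+1) 0 < Y * K := by
    have hq : 0 < auxPhi (a-c) (a+1) x / auxPhi (a-c) (a+1) 0 := div_pos hΦa1x hΦa10
    have step := Real.rpow_lt_rpow (Real.rpow_nonneg hq.le a) core
      (by positivity : (0:ℝ) < 1/a)
    rw [← Real.rpow_mul hq.le, mul_one_div_cancel ha.ne', Real.rpow_one] at step
    rw [← Real.rpow_mul hYpos.le] at step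
    rw [show (a+1) * (1/a) = 1 + 1/a by field_simp] at step
    rw [Real.rpow_add hYpos, Real.rpow_one] at step
    exact step
  -- hence Φa1x/Φax < (-1/c) * K
  have t2 : auxPhi (a-c) (a+1) x / auxPhi (a-c) a x < -(1/c) * K := by
    rw [div_lt_iff₀ hΦax]
    have t1' : auxPhi (a-c) (a+1) x < Y * K * auxPhi (a-c) (a+1) 0 :=
      (div_lt_iff₀ hΦa10).mp t1
    have heq : Y * K * auxPhi (a-c) (a+1) 0 = -(1/c) * K * auxPhi (a-c) a x := by
      have h0 : auxPhi (a-c) a 0 = -c * auxPhi (a-c) (a+1) 0 := by rw [hG1, hG2, hGrec]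
      rw [hY, h0]
      field_simp [hΦa10.ne']
    linarith [t1']
  -- AM-GM
  have am : 2 ≤ auxPhi (a-c) a x / auxPhi (a-c) (a+1) x
      + auxPhi (a-c) (a+1) x / auxPhi (a-c) a x := by
    rw [div_add_div _ _ hΦa1x.ne' hΦax.ne', le_div_iff₀ (mul_pos hΦa1x hΦax)]
    nlinarith [sq_nonneg (auxPhi (a-c) a x - auxPhi (a-c) (a+1) x)]
  linarith [am, t2]
end

section
/- For a > 0, c < −1, and x > 0, the inequality (Γ(a−c+1)/Γ(1−c) · ψ(a,c,x))^{c/(a(c+1))} < (Γ(a−c+1)/Γ(−c) · ψ(a+1,c+1,x))^{1/(a+1)} holds for the Tricomi confluent hypergeometric function ψ. -/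
open MeasureTheory Real

open Set Filter Topology ENNReal

/-- The family of integrals `∫ t in (0,∞), e^{-yt} t^s (1+t)^{c-a-1}`. -/
noncomputable def NN (a c s y : ℝ) : ℝ :=
  ∫ t in Set.Ioi (0:ℝ), Real.exp (-y * t) * t ^ s * (1 + t) ^ (c - a - 1)


lemma nn_meas (a c s y : ℝ) :
    AEStronglyMeasurable (fun t : ℝ => Real.exp (-y * t) * t ^ s * (1 + t) ^ (c - a - 1))
      (volume.restrict (Set.Ioi 0)) := by
  apply ContinuousOn.aestronglyMeasurable _ measurableSet_Ioi
  intro t ht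
  have h1 : ContinuousAt (fun t : ℝ => Real.exp (-y * t)) t :=
    (Real.continuous_exp.comp (continuous_const.mul continuous_id)).continuousAt
  have h2 : ContinuousAt (fun t : ℝ => t ^ s) t :=
    Real.continuousAt_rpow_const t s (Or.inl (ne_of_gt ht))
  have h3 : ContinuousAt (fun t : ℝ => (1 + t) ^ (c - a - 1)) t := by
    have : ContinuousAt (fun u : ℝ => u ^ (c - a - 1)) (1 + t) :=
      Real.continuousAt_rpow_const _ _ (Or.inl (by intro h; simp at ht; linarith))
    exact this.comp (continuous_const.add continuous_id).continuousAt
  exact ((h1.mul h2).mul h3).continuousWithinAt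

lemma nn_bound1 (a c s y t : ℝ) (hca : c - a - 1 ≤ 0) (hy : 0 ≤ y) (ht : 0 < t) :
    ‖Real.exp (-y * t) * t ^ s * (1 + t) ^ (c - a - 1)‖ ≤ t ^ s := by
  have h1 : (0:ℝ) < 1 + t := by linarith
  rw [Real.norm_eq_abs, abs_of_nonneg (by
    exact mul_nonneg (mul_nonneg (Real.exp_pos _).le (Real.rpow_nonneg ht.le _))
      (Real.rpow_nonneg h1.le _))]
  calc Real.exp (-y * t) * t ^ s * (1 + t) ^ (c - a - 1)
      ≤ 1 * t ^ s * 1 := by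
        apply mul_le_mul
        · apply mul_le_mul _ le_rfl (Real.rpow_nonneg ht.le _) zero_le_one
          exact Real.exp_le_one_iff.mpr (by nlinarith)
        · exact Real.rpow_le_one_of_one_le_of_nonpos (by linarith) hca
        · exact Real.rpow_nonneg h1.le _
        · exact mul_nonneg zero_le_one (Real.rpow_nonneg ht.le _)
    _ = t ^ s := by ring

lemma nn_int_zero (a c s y : ℝ) (hs : -1 < s) (hsc : s < a - c) (hy : 0 ≤ y) :
    IntegrableOn (fun t : ℝ => Real.exp (-y * t) * t ^ s * (1 + t) ^ (c - a - 1))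
      (Set.Ioi 0) := by
  have hca : c - a - 1 ≤ 0 := by linarith
  have hsplit : Set.Ioi (0:ℝ) = Set.Ioc 0 1 ∪ Set.Ioi 1 := (Set.Ioc_union_Ioi_eq_Ioi zero_le_one).symm
  rw [hsplit]
  apply IntegrableOn.union
  · -- on Ioc 0 1, bound by t ^ s
    have hi : IntegrableOn (fun t : ℝ => t ^ s) (Set.Ioc (0:ℝ) 1) := by
      have := intervalIntegral.intervalIntegrable_rpow' (a := 0) (b := 1) hs
      rwa [intervalIntegrable_iff_integrableOn_Ioc_of_le zero_le_one] at this
    apply hi.integrable.mono' ((nn_meas a c s y).mono_set Ioc_subset_Ioi_self)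
    filter_upwards [ae_restrict_mem measurableSet_Ioc] with t ht
    exact nn_bound1 a c s y t hca hy ht.1
  · -- on Ioi 1, bound by t ^ (s + (c - a - 1))
    have hi : IntegrableOn (fun t : ℝ => t ^ (s + (c - a - 1))) (Set.Ioi (1:ℝ)) :=
      integrableOn_Ioi_rpow_of_lt (by linarith) zero_lt_one
    apply hi.integrable.mono' ((nn_meas a c s y).mono_set (Ioi_subset_Ioi zero_le_one))
    filter_upwards [ae_restrict_mem measurableSet_Ioi] with t ht
    have ht1 : (1:ℝ) < t := ht
    have ht0 : (0:ℝ) < t := by linarith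
    have h1 : (0:ℝ) < 1 + t := by linarith
    rw [Real.norm_eq_abs, abs_of_nonneg (by
      exact mul_nonneg (mul_nonneg (Real.exp_pos _).le (Real.rpow_nonneg ht0.le _))
        (Real.rpow_nonneg h1.le _)), Real.rpow_add ht0]
    have e1 : Real.exp (-y * t) ≤ 1 := Real.exp_le_one_iff.mpr (by nlinarith)
    have e2 : (1 + t) ^ (c - a - 1) ≤ t ^ (c - a - 1) :=
      Real.rpow_le_rpow_of_nonpos ht0 (by linarith) hca
    calc Real.exp (-y * t) * t ^ s * (1 + t) ^ (c - a - 1)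
        ≤ 1 * t ^ s * t ^ (c - a - 1) := by
          apply mul_le_mul _ e2 (Real.rpow_nonneg h1.le _)
          · exact mul_nonneg zero_le_one (Real.rpow_nonneg ht0.le _)
          · exact mul_le_mul e1 le_rfl (Real.rpow_nonneg ht0.le _) zero_le_one
      _ = t ^ s * t ^ (c - a - 1) := by ring

lemma nn_int_pos (a c s y : ℝ) (hca : c - a - 1 ≤ 0) (hs : -1 < s) (hy : 0 < y) :
    IntegrableOn (fun t : ℝ => Real.exp (-y * t) * t ^ s * (1 + t) ^ (c - a - 1))
      (Set.Ioi 0) := by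
  have hi : IntegrableOn (fun t : ℝ => t ^ s * Real.exp (-y * t)) (Set.Ioi (0:ℝ)) := by
    simpa using integrableOn_rpow_mul_exp_neg_mul_rpow (p := 1) hs one_pos hy
  apply hi.integrable.mono' (nn_meas a c s y)
  filter_upwards [ae_restrict_mem measurableSet_Ioi] with t ht
  have ht0 : (0:ℝ) < t := ht
  have h1 : (0:ℝ) < 1 + t := by linarith
  rw [Real.norm_eq_abs, abs_of_nonneg (by
    exact mul_nonneg (mul_nonneg (Real.exp_pos _).le (Real.rpow_nonneg ht0.le _))
      (Real.rpow_nonneg h1.le _))]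
  rw [mul_comm (Real.exp (-y * t)) (t ^ s)]
  calc t ^ s * Real.exp (-y * t) * (1 + t) ^ (c - a - 1)
      ≤ t ^ s * Real.exp (-y * t) * 1 := by
        apply mul_le_mul_of_nonneg_left _ (mul_nonneg (Real.rpow_nonneg ht0.le _) (Real.exp_pos _).le)
        exact Real.rpow_le_one_of_one_le_of_nonpos (by linarith) hca
    _ = t ^ s * Real.exp (-y * t) := by ring

lemma nn_pos (a c s y : ℝ)
    (hint : IntegrableOn (fun t : ℝ => Real.exp (-y * t) * t ^ s * (1 + t) ^ (c - a - 1))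
      (Set.Ioi 0)) : 0 < NN a c s y := by
  have hnn : 0 ≤ᵐ[volume.restrict (Set.Ioi (0:ℝ))]
      fun t : ℝ => Real.exp (-y * t) * t ^ s * (1 + t) ^ (c - a - 1) := by
    filter_upwards [ae_restrict_mem measurableSet_Ioi] with t ht
    have ht0 : (0:ℝ) < t := ht
    have h1 : (0:ℝ) < 1 + t := by linarith
    exact mul_nonneg (mul_nonneg (Real.exp_pos _).le (Real.rpow_nonneg ht0.le _))
      (Real.rpow_nonneg h1.le _)
  rw [NN]
  rw [setIntegral_pos_iff_support_of_nonneg_ae hnn hint]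
  have hsub : Set.Ioi (0:ℝ) ⊆ Function.support
      (fun t : ℝ => Real.exp (-y * t) * t ^ s * (1 + t) ^ (c - a - 1)) ∩ Set.Ioi 0 := by
    intro t ht
    have ht0 : (0:ℝ) < t := ht
    have h1 : (0:ℝ) < 1 + t := by linarith
    refine ⟨?_, ht⟩
    have : 0 < Real.exp (-y * t) * t ^ s * (1 + t) ^ (c - a - 1) :=
      mul_pos (mul_pos (Real.exp_pos _) (Real.rpow_pos_of_pos ht0 _)) (Real.rpow_pos_of_pos h1 _)
    exact ne_of_gt this
  calc (0:ℝ≥0∞) < volume (Set.Ioi (0:ℝ)) := by simp [Real.volume_Ioi]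
    _ ≤ _ := measure_mono hsub

lemma nn_contOn (a c s : ℝ) (hs : -1 < s) (hsc : s < a - c) :
    ContinuousOn (fun y => NN a c s y) (Set.Ici 0) := by
  have hbi : Integrable (fun t : ℝ => t ^ s * (1 + t) ^ (c - a - 1))
      (volume.restrict (Set.Ioi 0)) := by
    have := nn_int_zero a c s 0 hs hsc le_rfl
    apply this.congr_fun ?_ measurableSet_Ioi
    intro t ht
    simp
  apply continuousOn_of_dominated (bound := fun t => t ^ s * (1 + t) ^ (c - a - 1))
  · exact fun x _ => nn_meas a c s x
  · intro x hx
    filter_upwards [ae_restrict_mem measurableSet_Ioi] with t ht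
    have ht0 : (0:ℝ) < t := ht
    have h1 : (0:ℝ) < 1 + t := by linarith
    rw [Real.norm_eq_abs, abs_of_nonneg (mul_nonneg (mul_nonneg (Real.exp_pos _).le
      (Real.rpow_nonneg ht0.le _)) (Real.rpow_nonneg h1.le _))]
    have e1 : Real.exp (-x * t) ≤ 1 := Real.exp_le_one_iff.mpr (by nlinarith [mem_Ici.mp hx])
    calc Real.exp (-x * t) * t ^ s * (1 + t) ^ (c - a - 1)
        ≤ 1 * t ^ s * (1 + t) ^ (c - a - 1) := by
          apply mul_le_mul_of_nonneg_right _ (Real.rpow_nonneg h1.le _)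
          exact mul_le_mul_of_nonneg_right e1 (Real.rpow_nonneg ht0.le _)
      _ = t ^ s * (1 + t) ^ (c - a - 1) := by ring
  · exact hbi
  · filter_upwards [ae_restrict_mem measurableSet_Ioi] with t ht
    apply Continuous.continuousOn
    have : Continuous (fun x : ℝ => -x * t) := by continuity
    exact (Real.continuous_exp.comp this).mul continuous_const |>.mul continuous_const

lemma nn_hasDeriv (a c s y : ℝ) (hca : c - a - 1 ≤ 0) (hs : -1 < s) (hy : 0 < y) :
    HasDerivAt (fun z => NN a c s z) (-NN a c (s+1) y) y := by
  have key := hasDerivAt_integral_of_dominated_loc_of_deriv_le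
    (μ := volume.restrict (Set.Ioi (0:ℝ)))
    (F := fun z t => Real.exp (-z * t) * t ^ s * (1 + t) ^ (c - a - 1))
    (F' := fun z t => (-t) * (Real.exp (-z * t) * t ^ s * (1 + t) ^ (c - a - 1)))
    (x₀ := y) (s := Metric.ball y (y/2))
    (bound := fun t => t ^ (s+1) * Real.exp (-(y/2) * t))
    (Metric.ball_mem_nhds y (by linarith))
    (Eventually.of_forall fun z => nn_meas a c s z)
    (nn_int_pos a c s y hca hs hy)
    ?_ ?_ ?_ ?_
  · -- conclude
    have h2 : (∫ t in Set.Ioi (0:ℝ),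
        (-t) * (Real.exp (-y * t) * t ^ s * (1 + t) ^ (c - a - 1))) = -NN a c (s+1) y := by
      rw [NN, ← integral_neg]
      apply setIntegral_congr_fun measurableSet_Ioi
      intro t ht
      have ht0 : (0:ℝ) < t := ht
      show -t * (Real.exp (-y * t) * t ^ s * (1 + t) ^ (c - a - 1))
        = -(Real.exp (-y * t) * t ^ (s+1) * (1 + t) ^ (c - a - 1))
      rw [Real.rpow_add_one (ne_of_gt ht0)]; ring
    rw [h2] at key
    exact key.2
  · -- measurability of F' y
    apply AEStronglyMeasurable.mul _ (nn_meas a c s y)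
    exact (continuous_neg.comp continuous_id).aestronglyMeasurable
  · -- bound
    filter_upwards [ae_restrict_mem measurableSet_Ioi] with t ht z hz
    have ht0 : (0:ℝ) < t := ht
    have h1 : (0:ℝ) < 1 + t := by linarith
    have hz2 : y/2 ≤ z := by
      have := abs_lt.mp (mem_ball_iff_norm.mp hz)
      linarith [this.1]
    rw [Real.norm_eq_abs, abs_mul, abs_neg, abs_of_nonneg ht0.le,
      abs_of_nonneg (mul_nonneg (mul_nonneg (Real.exp_pos _).le (Real.rpow_nonneg ht0.le _))
        (Real.rpow_nonneg h1.le _))]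
    have e1 : Real.exp (-z * t) ≤ Real.exp (-(y/2) * t) :=
      Real.exp_le_exp.mpr (by nlinarith)
    have e2 : (1 + t) ^ (c - a - 1) ≤ 1 :=
      Real.rpow_le_one_of_one_le_of_nonpos (by linarith) hca
    have : t * (Real.exp (-z * t) * t ^ s * (1 + t) ^ (c - a - 1))
        ≤ t * (Real.exp (-(y/2) * t) * t ^ s * 1) := by
      apply mul_le_mul_of_nonneg_left _ ht0.le
      apply mul_le_mul (mul_le_mul e1 le_rfl (Real.rpow_nonneg ht0.le _) (Real.exp_pos _).le)
        e2 (Real.rpow_nonneg h1.le _)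
        (mul_nonneg (Real.exp_pos _).le (Real.rpow_nonneg ht0.le _))
    calc t * (Real.exp (-z * t) * t ^ s * (1 + t) ^ (c - a - 1))
        ≤ t * (Real.exp (-(y/2) * t) * t ^ s * 1) := this
      _ = t ^ (s+1) * Real.exp (-(y/2) * t) := by
          rw [Real.rpow_add_one (ne_of_gt ht0)]; ring
  · -- bound integrable
    have : IntegrableOn (fun t : ℝ => t ^ (s+1) * Real.exp (-(y/2) * t)) (Set.Ioi (0:ℝ)) := by
      simpa using integrableOn_rpow_mul_exp_neg_mul_rpow (p := 1) (by linarith : (-1:ℝ) < s + 1) one_pos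
        (by linarith : (0:ℝ) < y/2)
    exact this
  · -- differentiability
    filter_upwards [ae_restrict_mem measurableSet_Ioi] with t ht z hz
    have : HasDerivAt (fun z : ℝ => Real.exp (-z * t)) ((-t) * Real.exp (-z * t)) z := by
      have h0 : HasDerivAt (fun z : ℝ => -z * t) (-t) z := by
        simpa using ((hasDerivAt_id z).neg.mul_const t)
      simpa [mul_comm] using h0.exp
    have := (this.mul_const (t ^ s)).mul_const ((1 + t) ^ (c - a - 1))
    exact this.congr_deriv (by ring)

lemma nn_rec (a c s y : ℝ) (hca : c < a) (hs : 0 < s) (hy : 0 < y) :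
    s * NN a c (s-1) y = (a - c - s + y) * NN a c s y + y * NN a c (s+1) y := by
  have hca1 : c - a - 1 ≤ 0 := by linarith
  set F : ℝ → ℝ := fun t => t ^ s * (1 + t) ^ (c - a) * Real.exp (-y * t) with hF
  set G : ℝ → ℝ := fun t =>
    (s * t ^ (s-1) * (1 + t) ^ (c - a) + (c - a) * t ^ s * (1 + t) ^ (c - a - 1)
      - y * (t ^ s * (1 + t) ^ (c - a))) * Real.exp (-y * t) with hG
  -- pointwise form of G as combination of NN-integrands
  have hGpt : ∀ t ∈ Set.Ioi (0:ℝ), G t =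
      s * (Real.exp (-y * t) * t ^ (s-1) * (1 + t) ^ (c - a - 1))
      + (s + c - a - y) * (Real.exp (-y * t) * t ^ s * (1 + t) ^ (c - a - 1))
      + (-y) * (Real.exp (-y * t) * t ^ (s+1) * (1 + t) ^ (c - a - 1)) := by
    intro t ht
    have ht0 : (0:ℝ) < t := ht
    have h1 : (0:ℝ) < 1 + t := by linarith
    have e1 : (1 + t) ^ (c - a - 1) * (1 + t) = (1 + t) ^ (c - a) := by
      rw [← Real.rpow_add_one (ne_of_gt h1), sub_add_cancel]
    have hu1 : t ^ s = t ^ (s-1) * t := by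
      nth_rewrite 1 [show s = (s - 1) + 1 by ring]
      rw [Real.rpow_add_one (ne_of_gt ht0)]
    have hu2 : t ^ (s+1) = t ^ (s-1) * t * t := by
      rw [Real.rpow_add_one (ne_of_gt ht0) s, hu1]
    rw [hG]
    simp only
    rw [← e1, hu2, hu1]
    ring
  -- derivative
  have hderiv : ∀ t ∈ Set.Ioi (0:ℝ), HasDerivAt F (G t) t := by
    intro t ht
    have ht0 : (0:ℝ) < t := ht
    have h1 : (0:ℝ) < 1 + t := by linarith
    have d1 : HasDerivAt (fun t : ℝ => t ^ s) (s * t ^ (s-1)) t :=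
      Real.hasDerivAt_rpow_const (Or.inl (ne_of_gt ht0))
    have d2 : HasDerivAt (fun t : ℝ => (1 + t) ^ (c - a)) ((c - a) * (1 + t) ^ (c - a - 1)) t := by
      have inner : HasDerivAt (fun t : ℝ => 1 + t) 1 t := (hasDerivAt_id t).const_add 1
      have outer : HasDerivAt (fun u : ℝ => u ^ (c - a)) ((c - a) * (1 + t) ^ (c - a - 1)) (1 + t) :=
        Real.hasDerivAt_rpow_const (Or.inl (ne_of_gt h1))
      have := outer.comp t inner; rw [mul_one] at this; exact this
    have d3 : HasDerivAt (fun t : ℝ => Real.exp (-y * t)) (-y * Real.exp (-y * t)) t := by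
      have h0 : HasDerivAt (fun t : ℝ => -y * t) (-y) t := by
        simpa using (hasDerivAt_id t).const_mul (-y)
      simpa [mul_comm] using h0.exp
    have := (d1.mul d2).mul d3
    refine HasDerivAt.congr_deriv this ?_
    simp only [hG, Pi.mul_apply]; ring
  -- tendsto 0 at top
  have htend : Tendsto F atTop (𝓝 0) := by
    have hbig : Tendsto (fun t : ℝ => t ^ s * Real.exp (-y * t)) atTop (𝓝 0) :=
      tendsto_rpow_mul_exp_neg_mul_atTop_nhds_zero s y hy
    apply squeeze_zero' (g := fun t : ℝ => t ^ s * Real.exp (-y * t)) ?_ ?_ hbig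
    · filter_upwards [eventually_gt_atTop (0:ℝ)] with t ht
      have h1 : (0:ℝ) < 1 + t := by linarith
      exact mul_nonneg (mul_nonneg (Real.rpow_nonneg ht.le _) (Real.rpow_nonneg h1.le _))
        (Real.exp_pos _).le
    · filter_upwards [eventually_gt_atTop (0:ℝ)] with t ht
      have h1 : (0:ℝ) < 1 + t := by linarith
      have e2 : (1 + t) ^ (c - a) ≤ 1 :=
        Real.rpow_le_one_of_one_le_of_nonpos (by linarith) (by linarith)
      calc t ^ s * (1 + t) ^ (c - a) * Real.exp (-y * t)
          ≤ t ^ s * 1 * Real.exp (-y * t) := by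
            apply mul_le_mul_of_nonneg_right _ (Real.exp_pos _).le
            exact mul_le_mul_of_nonneg_left e2 (Real.rpow_nonneg ht.le _)
        _ = t ^ s * Real.exp (-y * t) := by ring
  -- continuity at 0 and value
  have hF0 : F 0 = 0 := by
    rw [hF]; simp [Real.zero_rpow (ne_of_gt hs)]
  have hcont : ContinuousWithinAt F (Set.Ici 0) 0 := by
    apply ContinuousAt.continuousWithinAt
    have c1 : ContinuousAt (fun t : ℝ => t ^ s) 0 :=
      Real.continuousAt_rpow_const 0 s (Or.inr hs.le)
    have c2 : ContinuousAt (fun t : ℝ => (1 + t) ^ (c - a)) 0 := by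
      have : ContinuousAt (fun u : ℝ => u ^ (c - a)) (1 + 0) :=
        Real.continuousAt_rpow_const _ _ (Or.inl (by norm_num))
      exact this.comp (continuous_const.add continuous_id).continuousAt
    have c3 : ContinuousAt (fun t : ℝ => Real.exp (-y * t)) 0 :=
      (Real.continuous_exp.comp (continuous_const.mul continuous_id)).continuousAt
    exact (c1.mul c2).mul c3
  -- integrability of the pieces
  have i1 := nn_int_pos a c (s-1) y hca1 (by linarith) hy
  have i2 := nn_int_pos a c s y hca1 (by linarith) hy
  have i3 := nn_int_pos a c (s+1) y hca1 (by linarith) hy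
  have hGint : IntegrableOn G (Set.Ioi 0) := by
    apply IntegrableOn.congr_fun _ (fun t ht => (hGpt t ht).symm) measurableSet_Ioi
    exact ((i1.const_mul s).add (i2.const_mul _)).add (i3.const_mul _)
  -- FTC
  have hint : ∫ t in Set.Ioi (0:ℝ), G t = 0 - F 0 :=
    integral_Ioi_of_hasDerivAt_of_tendsto hcont hderiv hGint htend
  rw [hF0, sub_zero] at hint
  have hsplit : ∫ t in Set.Ioi (0:ℝ), G t =
      s * NN a c (s-1) y + (s + c - a - y) * NN a c s y + (-y) * NN a c (s+1) y := by
    rw [setIntegral_congr_fun measurableSet_Ioi hGpt]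
    rw [integral_add, integral_add]
    · rw [integral_const_mul, integral_const_mul, integral_const_mul]; rfl
    · exact i1.const_mul _
    · exact i2.const_mul _
    · exact (i1.const_mul _).add (i2.const_mul _)
    · exact i3.const_mul _
  rw [hsplit] at hint
  linarith

lemma nn_cs (a c s y : ℝ) (hca : c - a - 1 ≤ 0) (hs : -1 < s) (hy : 0 < y) :
    NN a c (s+1) y ^ 2 ≤ NN a c s y * NN a c (s+2) y := by
  have i1 := nn_int_pos a c s y hca hs hy
  have i2 := nn_int_pos a c (s+1) y hca (by linarith) hy
  have i3 := nn_int_pos a c (s+2) y hca (by linarith) hy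
  have p1 := nn_pos a c s y i1
  have p2 := nn_pos a c (s+1) y i2
  have p3 := nn_pos a c (s+2) y i3
  set lam : ℝ := NN a c (s+1) y / NN a c (s+2) y with hlam
  have key : 0 ≤ NN a c s y - 2 * lam * NN a c (s+1) y + lam ^ 2 * NN a c (s+2) y := by
    have heq : NN a c s y - 2 * lam * NN a c (s+1) y + lam ^ 2 * NN a c (s+2) y
        = ∫ t in Set.Ioi (0:ℝ),
            (Real.exp (-y * t) * t ^ s * (1 + t) ^ (c - a - 1)
            - 2 * lam * (Real.exp (-y * t) * t ^ (s+1) * (1 + t) ^ (c - a - 1))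
            + lam ^ 2 * (Real.exp (-y * t) * t ^ (s+2) * (1 + t) ^ (c - a - 1))) := by
      have im2 : IntegrableOn (fun t : ℝ =>
          2 * lam * (Real.exp (-y * t) * t ^ (s+1) * (1 + t) ^ (c - a - 1))) (Set.Ioi 0) :=
        i2.const_mul _
      have im3 : IntegrableOn (fun t : ℝ =>
          lam ^ 2 * (Real.exp (-y * t) * t ^ (s+2) * (1 + t) ^ (c - a - 1))) (Set.Ioi 0) :=
        i3.const_mul _
      have isub : IntegrableOn (fun t : ℝ =>
          Real.exp (-y * t) * t ^ s * (1 + t) ^ (c - a - 1)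
          - 2 * lam * (Real.exp (-y * t) * t ^ (s+1) * (1 + t) ^ (c - a - 1))) (Set.Ioi 0) :=
        i1.sub im2
      rw [integral_add isub im3, integral_sub i1 im2, integral_const_mul, integral_const_mul]
      rfl
    rw [heq]
    apply setIntegral_nonneg measurableSet_Ioi
    intro t ht
    have ht0 : (0:ℝ) < t := ht
    have h1 : (0:ℝ) < 1 + t := by linarith
    have hu1 : t ^ (s+1) = t ^ s * t := Real.rpow_add_one (ne_of_gt ht0) s
    have hu2 : t ^ (s+2) = t ^ s * t * t := by
      rw [show s + 2 = (s+1) + 1 by ring, Real.rpow_add_one (ne_of_gt ht0), hu1]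
    rw [hu1, hu2]
    have : Real.exp (-y * t) * t ^ s * (1 + t) ^ (c - a - 1)
        - 2 * lam * (Real.exp (-y * t) * (t ^ s * t) * (1 + t) ^ (c - a - 1))
        + lam ^ 2 * (Real.exp (-y * t) * (t ^ s * t * t) * (1 + t) ^ (c - a - 1))
        = (Real.exp (-y * t) * t ^ s * (1 + t) ^ (c - a - 1)) * (1 - lam * t) ^ 2 := by ring
    rw [this]
    exact mul_nonneg (mul_nonneg (mul_nonneg (Real.exp_pos _).le (Real.rpow_nonneg ht0.le _))
      (Real.rpow_nonneg h1.le _)) (sq_nonneg _)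
  have hl : lam * NN a c (s+2) y = NN a c (s+1) y := by
    rw [hlam, div_mul_cancel₀ _ (ne_of_gt p3)]
  nlinarith [key, p2, p3]

lemma nn_zero_val (a c s : ℝ) (hs : -1 < s) (hsc : s < a - c) :
    NN a c s 0 = Real.Gamma (s+1) * Real.Gamma (a - c - s) / Real.Gamma (a - c + 1) := by
  have hac : (0:ℝ) < a - c + 1 := by linarith
  have hGm : (0:ℝ) < Real.Gamma (a - c + 1) := Real.Gamma_pos_of_pos hac
  set f : ℝ → ℝ → ℝ := fun t r => t ^ s * (r ^ (a - c + 1 - 1) * Real.exp (-((1+t) * r)))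
    with hf
  have claimA : ∀ t : ℝ, 0 < t →
      (∫ r in Set.Ioi (0:ℝ), r ^ (a - c + 1 - 1) * Real.exp (-((1+t) * r)))
        = (1+t) ^ (c - a - 1) * Real.Gamma (a - c + 1) := by
    intro t ht
    have h1 : (0:ℝ) < 1 + t := by linarith
    rw [integral_rpow_mul_exp_neg_mul_Ioi hac h1]
    congr 1
    rw [one_div, Real.inv_rpow h1.le, ← Real.rpow_neg h1.le]
    congr 1
    ring
  -- inner integral over r
  have hinner : ∀ t ∈ Set.Ioi (0:ℝ), (∫ r in Set.Ioi (0:ℝ), f t r)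
      = (t ^ s * (1+t) ^ (c - a - 1)) * Real.Gamma (a - c + 1) := by
    intro t ht
    rw [hf]
    simp only
    rw [integral_const_mul, claimA t ht]
    ring
  -- slice integrability in r
  have hslice : ∀ t ∈ Set.Ioi (0:ℝ), Integrable (fun r => f t r)
      (volume.restrict (Set.Ioi 0)) := by
    intro t ht
    have ht0 : (0:ℝ) < t := ht
    have h1 : (0:ℝ) < 1 + t := by linarith
    have : IntegrableOn (fun r : ℝ => r ^ (a - c + 1 - 1) * Real.exp (-((1+t) * r)))
        (Set.Ioi (0:ℝ)) := by
      have := integrableOn_rpow_mul_exp_neg_mul_rpow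
        (p := 1) (show (-1:ℝ) < a - c + 1 - 1 by linarith) one_pos h1
      simp only [Real.rpow_one] at this
      apply this.congr_fun _ measurableSet_Ioi
      intro r hr
      simp only
      rw [neg_mul]
    exact this.const_mul _
  -- nonnegativity of f on the domain
  have hfnn : ∀ t ∈ Set.Ioi (0:ℝ), ∀ r ∈ Set.Ioi (0:ℝ), 0 ≤ f t r := by
    intro t ht r hr
    have ht0 : (0:ℝ) < t := ht
    have hr0 : (0:ℝ) < r := hr
    exact mul_nonneg (Real.rpow_nonneg ht0.le _)
      (mul_nonneg (Real.rpow_nonneg hr0.le _) (Real.exp_pos _).le)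
  -- measurability on the product
  have hmeas : AEStronglyMeasurable (Function.uncurry f)
      ((volume.restrict (Set.Ioi (0:ℝ))).prod (volume.restrict (Set.Ioi (0:ℝ)))) := by
    rw [Measure.prod_restrict]
    apply ContinuousOn.aestronglyMeasurable _ (measurableSet_Ioi.prod measurableSet_Ioi)
    intro p hp
    have hp1 : (0:ℝ) < p.1 := hp.1
    have hp2 : (0:ℝ) < p.2 := hp.2
    have c1 : ContinuousAt (fun p : ℝ × ℝ => p.1 ^ s) p :=
      (Real.continuousAt_rpow_const p.1 s (Or.inl (ne_of_gt hp1))).comp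
        continuous_fst.continuousAt
    have c2 : ContinuousAt (fun p : ℝ × ℝ => p.2 ^ (a - c + 1 - 1)) p :=
      (Real.continuousAt_rpow_const p.2 _ (Or.inl (ne_of_gt hp2))).comp
        continuous_snd.continuousAt
    have c3 : Continuous (fun p : ℝ × ℝ => Real.exp (-((1 + p.1) * p.2))) := by
      apply Real.continuous_exp.comp
      continuity
    exact ((c1.mul (c2.mul c3.continuousAt)).continuousWithinAt :)
  -- integrability on the product
  have hprod : Integrable (Function.uncurry f)
      ((volume.restrict (Set.Ioi (0:ℝ))).prod (volume.restrict (Set.Ioi (0:ℝ)))) := by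
    rw [integrable_prod_iff hmeas]
    constructor
    · filter_upwards [ae_restrict_mem measurableSet_Ioi] with t ht
      exact hslice t ht
    · have : ∀ t ∈ Set.Ioi (0:ℝ), (∫ r in Set.Ioi (0:ℝ), ‖f t r‖)
          = Real.Gamma (a - c + 1) * (Real.exp (-(0:ℝ) * t) * t ^ s * (1+t) ^ (c - a - 1)) := by
        intro t ht
        have : (∫ r in Set.Ioi (0:ℝ), ‖f t r‖) = ∫ r in Set.Ioi (0:ℝ), f t r := by
          apply setIntegral_congr_fun measurableSet_Ioi
          intro r hr
          exact Real.norm_of_nonneg (hfnn t ht r hr)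
        rw [this, hinner t ht]
        simp
        ring
      apply Integrable.congr (((nn_int_zero a c s 0 hs hsc le_rfl)).const_mul
        (Real.Gamma (a - c + 1)))
      filter_upwards [ae_restrict_mem measurableSet_Ioi] with t ht
      exact (this t ht).symm
  -- Fubini
  have hswap : (∫ t in Set.Ioi (0:ℝ), ∫ r in Set.Ioi (0:ℝ), f t r)
      = ∫ r in Set.Ioi (0:ℝ), ∫ t in Set.Ioi (0:ℝ), f t r :=
    integral_integral_swap hprod
  -- evaluate the swapped integral
  have houter : (∫ r in Set.Ioi (0:ℝ), ∫ t in Set.Ioi (0:ℝ), f t r)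
      = Real.Gamma (s+1) * Real.Gamma (a - c - s) := by
    have hptw : ∀ r ∈ Set.Ioi (0:ℝ), (∫ t in Set.Ioi (0:ℝ), f t r)
        = Real.Gamma (s+1) * (r ^ (a - c - s - 1) * Real.exp (-(1 * r))) := by
      intro r hr
      have hr0 : (0:ℝ) < r := hr
      have e1 : ∀ t ∈ Set.Ioi (0:ℝ), f t r
          = (r ^ (a - c + 1 - 1) * Real.exp (-r)) * (t ^ s * Real.exp (-(r * t))) := by
        intro t ht
        rw [hf]
        simp only
        rw [show -((1+t) * r) = -r + -(r*t) by ring, Real.exp_add]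
        ring
      rw [setIntegral_congr_fun measurableSet_Ioi e1, integral_const_mul]
      have e2 : (∫ t in Set.Ioi (0:ℝ), t ^ s * Real.exp (-(r * t)))
          = (1/r) ^ (s+1) * Real.Gamma (s+1) := by
        have := integral_rpow_mul_exp_neg_mul_Ioi (show (0:ℝ) < s + 1 by linarith) hr0
        rw [show s + 1 - 1 = s by ring] at this
        exact this
      rw [e2]
      have e3 : (1/r) ^ (s+1) = r ^ (-(s+1)) := by
        rw [one_div, Real.inv_rpow hr0.le, ← Real.rpow_neg hr0.le]
      have e4 : r ^ (a - c + 1 - 1) * r ^ (-(s+1)) = r ^ (a - c - s - 1) := by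
        rw [← Real.rpow_add hr0]; congr 1; ring
      rw [e3, one_mul, ← e4]
      ring
    rw [setIntegral_congr_fun measurableSet_Ioi hptw, integral_const_mul,
      integral_rpow_mul_exp_neg_mul_Ioi (show (0:ℝ) < a - c - s by linarith) one_pos]
    simp
  -- assemble
  have h0 : NN a c s 0 = ∫ t in Set.Ioi (0:ℝ), t ^ s * (1+t) ^ (c - a - 1) := by
    apply setIntegral_congr_fun measurableSet_Ioi
    intro t ht
    simp
  have hG : Real.Gamma (a - c + 1) * NN a c s 0
      = ∫ t in Set.Ioi (0:ℝ), ∫ r in Set.Ioi (0:ℝ), f t r := by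
    rw [h0, ← integral_const_mul]
    apply setIntegral_congr_fun measurableSet_Ioi
    intro t ht
    simp only
    rw [hinner t ht]
    ring
  have hfin : Real.Gamma (a - c + 1) * NN a c s 0
      = Real.Gamma (s+1) * Real.Gamma (a - c - s) := by
    rw [hG, hswap, houter]
  rw [eq_div_iff (ne_of_gt hGm)]
  linarith

theorem psi_power_ineq2 (a c x : ℝ) (ha : 0 < a) (hc : c < -1) (hx : 0 < x) :
    (Real.Gamma (a - c + 1) / Real.Gamma (1 - c) * tricomiPsi a c x) ^ (c / (a * (c + 1)))
      < (Real.Gamma (a - c + 1) / Real.Gamma (-c) * tricomiPsi (a + 1) (c + 1) x) ^ (1 / (a + 1)) := by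
  have hca1 : c - a - 1 ≤ 0 := by linarith
  set p : ℝ := c / (a * (c + 1)) with hpdef
  set q : ℝ := 1 / (a + 1) with hqdef
  have hp : 0 < p := div_pos_of_neg_of_neg (by linarith) (by nlinarith)
  have hq : 0 < q := by rw [hqdef]; positivity
  -- integrability and positivity at all the needed points
  have hintm : ∀ y : ℝ, 0 ≤ y → IntegrableOn
      (fun t : ℝ => Real.exp (-y * t) * t ^ (a-1) * (1 + t) ^ (c - a - 1)) (Set.Ioi 0) :=
    fun y hy => nn_int_zero a c (a-1) y (by linarith) (by linarith) hy
  have hint0 : ∀ y : ℝ, 0 ≤ y → IntegrableOn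
      (fun t : ℝ => Real.exp (-y * t) * t ^ a * (1 + t) ^ (c - a - 1)) (Set.Ioi 0) :=
    fun y hy => nn_int_zero a c a y (by linarith) (by linarith) hy
  have hposm : ∀ y : ℝ, 0 ≤ y → 0 < NN a c (a-1) y := fun y hy => nn_pos _ _ _ _ (hintm y hy)
  have hpos0 : ∀ y : ℝ, 0 ≤ y → 0 < NN a c a y := fun y hy => nn_pos _ _ _ _ (hint0 y hy)
  have hpos1 : ∀ y : ℝ, 0 < y → 0 < NN a c (a+1) y :=
    fun y hy => nn_pos _ _ _ _ (nn_int_pos a c (a+1) y hca1 (by linarith) hy)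
  have hpos2 : ∀ y : ℝ, 0 < y → 0 < NN a c (a+2) y :=
    fun y hy => nn_pos _ _ _ _ (nn_int_pos a c (a+2) y hca1 (by linarith) hy)
  -- the auxiliary function h
  set h : ℝ → ℝ := fun y => p * Real.log (NN a c (a-1) y) - q * Real.log (NN a c a y)
    with hhdef
  have hanti : StrictAntiOn h (Set.Icc 0 x) := by
    apply strictAntiOn_of_deriv_neg (convex_Icc 0 x)
    · apply ContinuousOn.sub
      · exact continuousOn_const.mul (ContinuousOn.log
          ((nn_contOn a c (a-1) (by linarith) (by linarith)).mono (fun y hy => hy.1))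
          (fun y hy => ne_of_gt (hposm y hy.1)))
      · exact continuousOn_const.mul (ContinuousOn.log
          ((nn_contOn a c a (by linarith) (by linarith)).mono (fun y hy => hy.1))
          (fun y hy => ne_of_gt (hpos0 y hy.1)))
    · intro y hy
      rw [interior_Icc] at hy
      have hy0 : 0 < y := hy.1
      have pNm := hposm y hy0.le
      have pN0 := hpos0 y hy0.le
      have pN1 := hpos1 y hy0
      have pN2 := hpos2 y hy0
      -- derivative of h at y
      have hdm : HasDerivAt (fun z => NN a c (a-1) z) (-NN a c a y) y := by
        have := nn_hasDeriv a c (a-1) y hca1 (by linarith) hy0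
        rwa [sub_add_cancel] at this
      have hd0 : HasDerivAt (fun z => NN a c a z) (-NN a c (a+1) y) y :=
        nn_hasDeriv a c a y hca1 (by linarith) hy0
      have hlogm : HasDerivAt (fun z => Real.log (NN a c (a-1) z))
          (-NN a c a y / NN a c (a-1) y) y := hdm.log (ne_of_gt pNm)
      have hlog0 : HasDerivAt (fun z => Real.log (NN a c a z))
          (-NN a c (a+1) y / NN a c a y) y := hd0.log (ne_of_gt pN0)
      have hh : HasDerivAt h
          (p * (-NN a c a y / NN a c (a-1) y) - q * (-NN a c (a+1) y / NN a c a y)) y :=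
        (hlogm.const_mul p).sub (hlog0.const_mul q)
      rw [hh.deriv]
      -- the key inequality
      have I := nn_rec a c a y (by linarith) ha hy0
      have II := nn_rec a c (a+1) y (by linarith) (by linarith) hy0
      rw [add_sub_cancel_right, show a + 1 + 1 = a + 2 by ring] at II
      have CS := nn_cs a c a y hca1 (by linarith) hy0
      have m1 : (-c-1) * NN a c (a+1) y * (a * NN a c (a-1) y)
          = (-c-1) * NN a c (a+1) y * ((a - c - a + y) * NN a c a y + y * NN a c (a+1) y) := by
        rw [I]
      have m2 : (-c) * NN a c a y * ((a+1) * NN a c a y)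
          = (-c) * NN a c a y * ((a - c - (a+1) + y) * NN a c (a+1) y + y * NN a c (a+2) y) := by
        rw [II]
      have m3 : y * (-c) * (NN a c (a+1) y ^ 2) ≤ y * (-c) * (NN a c a y * NN a c (a+2) y) :=
        mul_le_mul_of_nonneg_left CS (mul_nonneg hy0.le (by linarith))
      have key : c * (a+1) * (NN a c a y) ^ 2 < a * (c+1) * (NN a c (a-1) y * NN a c (a+1) y) := by
        nlinarith [m1, m2, m3, mul_pos (mul_pos hy0 pN0) pN1, mul_pos (mul_pos hy0 pN1) pN1]
      have hrw : p * (-NN a c a y / NN a c (a-1) y) - q * (-NN a c (a+1) y / NN a c a y)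
          = (q * (NN a c (a+1) y * NN a c (a-1) y) - p * (NN a c a y) ^ 2)
            / (NN a c (a-1) y * NN a c a y) := by
        field_simp
        ring
      rw [hrw]
      apply div_neg_of_neg_of_pos _ (mul_pos pNm pN0)
      rw [sub_neg]
      -- q * (N1 * Nm) < p * N0 ^ 2
      have hne1 : a * (c+1) ≠ 0 := mul_ne_zero (ne_of_gt ha) (by linarith)
      have hne2 : (a:ℝ) + 1 ≠ 0 := by linarith
      have hden : a * (c+1) * (a+1) < 0 := by nlinarith [mul_pos ha (show (0:ℝ) < a + 1 by linarith)]
      have hnum : c * (a+1) * (NN a c a y)^2 - a * (c+1) * (NN a c (a-1) y * NN a c (a+1) y)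
          < 0 := by linarith [key]
      have heq : p * (NN a c a y)^2 - q * (NN a c (a+1) y * NN a c (a-1) y)
          = (c * (a+1) * (NN a c a y)^2 - a * (c+1) * (NN a c (a-1) y * NN a c (a+1) y))
            / (a * (c+1) * (a+1)) := by
        rw [hpdef, hqdef]
        field_simp [show (1:ℝ) + c ≠ 0 by linarith, show c + 1 ≠ 0 by linarith]
      have hfin : 0 < p * (NN a c a y)^2 - q * (NN a c (a+1) y * NN a c (a-1) y) := by
        rw [heq]
        exact div_pos_of_neg_of_neg hnum hden
      linarith
  -- conclude h x < h 0
  have hx0 : h x < h 0 := hanti ⟨le_rfl, hx.le⟩ ⟨hx.le, le_rfl⟩ hx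
  have hGa : 0 < Real.Gamma a := Real.Gamma_pos_of_pos ha
  have hGa1 : 0 < Real.Gamma (a+1) := Real.Gamma_pos_of_pos (by linarith)
  have hG1c : 0 < Real.Gamma (1-c) := Real.Gamma_pos_of_pos (by linarith)
  have hGc : 0 < Real.Gamma (-c) := Real.Gamma_pos_of_pos (by linarith)
  have hGac : 0 < Real.Gamma (a-c+1) := Real.Gamma_pos_of_pos (by linarith)
  have vm : NN a c (a-1) 0 = Real.Gamma a * Real.Gamma (1-c) / Real.Gamma (a-c+1) := by
    have := nn_zero_val a c (a-1) (by linarith) (by linarith)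
    rwa [sub_add_cancel, show a - c - (a-1) = 1 - c by ring] at this
  have v0 : NN a c a 0 = Real.Gamma (a+1) * Real.Gamma (-c) / Real.Gamma (a-c+1) := by
    have := nn_zero_val a c a (by linarith) (by linarith)
    rwa [show a - c - a = -c by ring] at this
  have hpsi1 : tricomiPsi a c x = (1 / Real.Gamma a) * NN a c (a-1) x := rfl
  have hpsi2 : tricomiPsi (a+1) (c+1) x = (1 / Real.Gamma (a+1)) * NN a c a x := by
    rw [tricomiPsi, NN]
    rw [show (a:ℝ) + 1 - 1 = a by ring, show c + 1 - (a+1) - 1 = c - a - 1 by ring]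
  have em : Real.Gamma (a-c+1) / Real.Gamma (1-c) * tricomiPsi a c x
      = NN a c (a-1) x / NN a c (a-1) 0 := by
    rw [hpsi1, vm]; field_simp
  have e0 : Real.Gamma (a-c+1) / Real.Gamma (-c) * tricomiPsi (a+1) (c+1) x
      = NN a c a x / NN a c a 0 := by
    rw [hpsi2, v0]; field_simp
  have bm : 0 < NN a c (a-1) x / NN a c (a-1) 0 := div_pos (hposm x hx.le) (hposm 0 le_rfl)
  have b0 : 0 < NN a c a x / NN a c a 0 := div_pos (hpos0 x hx.le) (hpos0 0 le_rfl)
  rw [em, e0, Real.rpow_def_of_pos bm, Real.rpow_def_of_pos b0, Real.exp_lt_exp]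
  rw [Real.log_div (ne_of_gt (hposm x hx.le)) (ne_of_gt (hposm 0 le_rfl)),
    Real.log_div (ne_of_gt (hpos0 x hx.le)) (ne_of_gt (hpos0 0 le_rfl))]
  simp only [hhdef] at hx0
  linarith
end

section
/- For a > 0, c < 0, and x > 0, the inequality ψ(a+1,c+1,x) < −(1/c)·ψ(a,c,x) holds for the Tricomi confluent hypergeometric function ψ. -/
open MeasureTheory Real

private lemma aux_integrable {x p q : ℝ} (hx : 0 < x) (hp : -1 < p) (hq : q ≤ 0) :
    IntegrableOn (fun t : ℝ => Real.exp (-x * t) * t ^ p * (1 + t) ^ q) (Set.Ioi 0) := by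
  have hdom : IntegrableOn (fun t : ℝ => t ^ p * Real.exp (-x * t ^ (1:ℝ))) (Set.Ioi 0) :=
    integrableOn_rpow_mul_exp_neg_mul_rpow hp one_pos hx
  refine Integrable.mono hdom ?_ ?_
  · apply ContinuousOn.aestronglyMeasurable ?_ measurableSet_Ioi
    apply ContinuousOn.mul
    apply ContinuousOn.mul
    · exact (Real.continuous_exp.comp (continuous_const.mul continuous_id)).continuousOn
    · intro t ht
      exact (Real.continuousAt_rpow_const t p (Or.inl (ne_of_gt ht))).continuousWithinAt
    · intro t ht
      have h1t : (1:ℝ) + t ≠ 0 := by simp only [Set.mem_Ioi] at ht; linarith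
      exact ((Real.continuousAt_rpow_const (1 + t) q (Or.inl h1t)).comp
        (by fun_prop)).continuousWithinAt
  · filter_upwards [ae_restrict_mem measurableSet_Ioi] with t ht
    simp only [Set.mem_Ioi] at ht
    have he : (0:ℝ) < Real.exp (-x * t) := Real.exp_pos _
    have htp : (0:ℝ) ≤ t ^ p := Real.rpow_nonneg ht.le _
    have h1q : (1 + t) ^ q ≤ 1 := Real.rpow_le_one_of_one_le_of_nonpos (by linarith) hq
    have h1q' : (0:ℝ) ≤ (1 + t) ^ q := Real.rpow_nonneg (by linarith) _
    rw [Real.norm_eq_abs, Real.norm_eq_abs, abs_of_nonneg (by positivity),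
      abs_of_nonneg (by positivity), Real.rpow_one]
    calc Real.exp (-x * t) * t ^ p * (1 + t) ^ q
        ≤ Real.exp (-x * t) * t ^ p * 1 := by
          apply mul_le_mul_of_nonneg_left h1q (by positivity)
      _ = t ^ p * Real.exp (-x * t) := by ring

private lemma aux_pos {x p q : ℝ} (hx : 0 < x) (hp : -1 < p) (hq : q ≤ 0) :
    0 < ∫ t in Set.Ioi (0:ℝ), Real.exp (-x * t) * t ^ p * (1 + t) ^ q := by
  rw [setIntegral_pos_iff_support_of_nonneg_ae ?_ (aux_integrable hx hp hq)]
  · refine lt_of_lt_of_le ?_ (measure_mono (?_ : Set.Ioi (0:ℝ) ⊆ _))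
    · rw [Real.volume_Ioi]; exact ENNReal.zero_lt_top
    · intro t ht
      simp only [Set.mem_Ioi] at ht
      refine ⟨?_, ht⟩
      have : 0 < Real.exp (-x * t) * t ^ p * (1 + t) ^ q := by
        have := Real.rpow_pos_of_pos ht p
        have : (0:ℝ) < (1 + t) ^ q := Real.rpow_pos_of_pos (by linarith) q
        positivity
      exact Function.mem_support.2 (ne_of_gt this)
  · filter_upwards [ae_restrict_mem measurableSet_Ioi] with t ht
    simp only [Set.mem_Ioi] at ht
    have := Real.rpow_nonneg ht.le p
    have : (0:ℝ) ≤ (1 + t) ^ q := Real.rpow_nonneg (by linarith) q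
    positivity

theorem psi_ratio_lt (a c x : ℝ) (ha : 0 < a) (hc : c < 0) (hx : 0 < x) :
    tricomiPsi (a + 1) (c + 1) x < -(1 / c) * tricomiPsi a c x := by
  set q : ℝ := c - a - 1 with hqdef
  have hq : q ≤ 0 := by simp [hqdef]; linarith
  -- the three integrals
  set I : ℝ → ℝ := fun p => ∫ t in Set.Ioi (0:ℝ),
    Real.exp (-x * t) * t ^ p * (1 + t) ^ q with hIdef
  have hint : ∀ p : ℝ, -1 < p →
      IntegrableOn (fun t : ℝ => Real.exp (-x * t) * t ^ p * (1 + t) ^ q) (Set.Ioi 0) :=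
    fun p hp => aux_integrable hx hp hq
  -- the boundary function for integration by parts
  set G : ℝ → ℝ := fun t => Real.exp (-x * t) * t ^ a * (1 + t) ^ (c - a) with hGdef
  set G' : ℝ → ℝ := fun t =>
    Real.exp (-x * t) * t ^ (a - 1) * (1 + t) ^ q * (a + (c - x) * t - x * (t * t)) with hG'def
  have hderiv : ∀ t ∈ Set.Ioi (0:ℝ), HasDerivAt G (G' t) t := by
    intro t ht
    simp only [Set.mem_Ioi] at ht
    have h1t : (0:ℝ) < 1 + t := by linarith
    have h1 : HasDerivAt (fun t : ℝ => Real.exp (-x * t)) (Real.exp (-x * t) * (-x)) t := by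
      simpa using ((hasDerivAt_id t).const_mul (-x)).exp
    have h2 : HasDerivAt (fun t : ℝ => t ^ a) (a * t ^ (a - 1)) t :=
      Real.hasDerivAt_rpow_const (Or.inl (ne_of_gt ht))
    have h3 : HasDerivAt (fun t : ℝ => (1 + t) ^ (c - a))
        (1 * (c - a) * (1 + t) ^ (c - a - 1)) t :=
      ((hasDerivAt_id t).const_add 1).rpow_const (Or.inl (ne_of_gt h1t))
    have h := (h1.mul h2).mul h3
    refine h.congr_deriv ?_
    have hta : t ^ a = t ^ (a - 1) * t := by
      rw [← Real.rpow_add_one (ne_of_gt ht) (a - 1)]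
      norm_num
    have h1ta : (1 + t) ^ (c - a) = (1 + t) ^ (c - a - 1) * (1 + t) := by
      rw [← Real.rpow_add_one (ne_of_gt h1t) (c - a - 1)]
      norm_num
    simp only [hG'def, hqdef, Pi.mul_apply]
    rw [hta, h1ta]
    ring
  have hG0 : ContinuousWithinAt G (Set.Ici 0) 0 := by
    apply ContinuousAt.continuousWithinAt
    apply ContinuousAt.mul
    apply ContinuousAt.mul
    · exact (Real.continuous_exp.comp (continuous_const.mul continuous_id)).continuousAt
    · exact Real.continuousAt_rpow_const 0 a (Or.inr ha.le)
    · exact (Real.continuousAt_rpow_const (1 + 0) (c - a) (Or.inl (by norm_num))).comp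
        (by fun_prop)
  have hGtop : Filter.Tendsto G Filter.atTop (nhds 0) := by
    have hb : Filter.Tendsto (fun t : ℝ => t ^ a * Real.exp (-x * t)) Filter.atTop (nhds 0) :=
      tendsto_rpow_mul_exp_neg_mul_atTop_nhds_zero a x hx
    apply squeeze_zero_norm' ?_ (by simpa using hb.norm)
    filter_upwards [Filter.eventually_gt_atTop (0:ℝ)] with t ht
    have h1t : (0:ℝ) < 1 + t := by linarith
    have hle : (1 + t) ^ (c - a) ≤ 1 :=
      Real.rpow_le_one_of_one_le_of_nonpos (by linarith) (by linarith)
    have h0 : (0:ℝ) ≤ (1 + t) ^ (c - a) := Real.rpow_nonneg h1t.le _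
    have htp : (0:ℝ) ≤ t ^ a := Real.rpow_nonneg ht.le _
    have he : (0:ℝ) < Real.exp (-x * t) := Real.exp_pos _
    simp only [hGdef, Real.norm_eq_abs]
    rw [abs_of_nonneg (by positivity), abs_of_nonneg (by positivity)]
    calc Real.exp (-x * t) * t ^ a * (1 + t) ^ (c - a)
        ≤ Real.exp (-x * t) * t ^ a * 1 := mul_le_mul_of_nonneg_left hle (by positivity)
      _ = t ^ a * Real.exp (-(x * t)) := by rw [neg_mul]; ring
  -- G' integrable
  have hG'eq : ∀ t ∈ Set.Ioi (0:ℝ), G' t =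
      a * (Real.exp (-x * t) * t ^ (a - 1) * (1 + t) ^ q)
      + (c - x) * (Real.exp (-x * t) * t ^ a * (1 + t) ^ q)
      - x * (Real.exp (-x * t) * t ^ (a + 1) * (1 + t) ^ q) := by
    intro t ht
    simp only [Set.mem_Ioi] at ht
    have hta : t ^ a = t ^ (a - 1) * t := by
      rw [← Real.rpow_add_one (ne_of_gt ht) (a - 1)]
      norm_num
    have hta1 : t ^ (a + 1) = t ^ (a - 1) * t * t := by
      rw [Real.rpow_add_one (ne_of_gt ht), hta]
    simp only [hG'def]
    rw [hta1, hta]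
    ring
  have hG'int : IntegrableOn G' (Set.Ioi 0) := by
    apply IntegrableOn.congr_fun ?_ (fun t ht => (hG'eq t ht).symm) measurableSet_Ioi
    exact (((hint (a - 1) (by linarith)).const_mul a).add
      ((hint a (by linarith)).const_mul (c - x))).sub ((hint (a + 1) (by linarith)).const_mul x)
  have hibp : ∫ t in Set.Ioi (0:ℝ), G' t = 0 - G 0 :=
    integral_Ioi_of_hasDerivAt_of_tendsto hG0 hderiv hG'int hGtop
  have hG0val : G 0 = 0 := by
    simp only [hGdef]
    rw [Real.zero_rpow (ne_of_gt ha)]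
    ring
  -- key identity : a * I (a-1) + (c - x) * I a - x * I (a+1) = 0
  have hkey : a * I (a - 1) + (c - x) * I a - x * I (a + 1) = 0 := by
    have h1 : ∫ t in Set.Ioi (0:ℝ), G' t =
        a * I (a - 1) + (c - x) * I a - x * I (a + 1) := by
      rw [setIntegral_congr_fun measurableSet_Ioi hG'eq]
      rw [integral_sub (by
        exact (((hint (a - 1) (by linarith)).const_mul a).add
          ((hint a (by linarith)).const_mul (c - x)))) ((hint (a + 1) (by linarith)).const_mul x)]
      rw [integral_add ((hint (a - 1) (by linarith)).const_mul a)
        ((hint a (by linarith)).const_mul (c - x))]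
      simp only [hIdef]
      rw [integral_const_mul, integral_const_mul, integral_const_mul]
    rw [h1, hG0val] at hibp
    linarith [hibp]
  have hIa : 0 < I a := aux_pos hx (by linarith) hq
  have hIa1 : 0 < I (a + 1) := aux_pos hx (by linarith) hq
  have hmain : 0 < a * I (a - 1) + c * I a := by nlinarith
  -- rewrite the two tricomiPsi values
  have hGa : 0 < Real.Gamma a := Real.Gamma_pos_of_pos ha
  have hpsi0 : tricomiPsi a c x = (1 / Real.Gamma a) * I (a - 1) := rfl
  have hpsi1 : tricomiPsi (a + 1) (c + 1) x = (1 / (a * Real.Gamma a)) * I a := by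
    unfold tricomiPsi
    rw [Real.Gamma_add_one (ne_of_gt ha)]
    congr 1
    simp only [hIdef, hqdef]
    rw [show a + 1 - 1 = a by ring, show c + 1 - (a + 1) - 1 = c - a - 1 by ring]
  rw [hpsi0, hpsi1]
  have hdiff : (1 / (a * Real.Gamma a)) * I a
      - (-(1 / c)) * ((1 / Real.Gamma a) * I (a - 1))
      = (a * I (a - 1) + c * I a) / (a * c * Real.Gamma a) := by
    field_simp [ne_of_gt ha, ne_of_lt hc, ne_of_gt hGa]
    ring
  have hden : a * c * Real.Gamma a < 0 := by
    have : a * c < 0 := mul_neg_of_pos_of_neg ha hc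
    exact mul_neg_of_neg_of_pos this hGa
  have : (a * I (a - 1) + c * I a) / (a * c * Real.Gamma a) < 0 :=
    div_neg_of_pos_of_neg hmain hden
  linarith [hdiff ▸ this]
end

section
/- For a > 1 and 0 < y < 1, the inequality (1/a)·(1 + (1−2a)·y²) < (1/a)·(1 − y²) holds, and consequently for a > 1, c ∈ ℝ, x > 0, the Laplace-transform comparison ∫₀^t (t−u)^{a−2}(1+t−u)^{c−a−1} u^{a−1}(1+u)^{c−a−1}·(t − u·(2a−1)/a) du < (1/a)·∫₀^t (t−u)^{a−1}(1+t−u)^{c−a−1} u^{a−1}(1+u)^{c−a−1} du holds for every t > 0. -/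
open MeasureTheory Real

theorem pointwise_and_convolution_comparison (a : ℝ) (ha : 1 < a) :
    (∀ y : ℝ, 0 < y → y < 1 →
      (1 / a) * (1 + (1 - 2 * a) * y ^ 2) < (1 / a) * (1 - y ^ 2)) ∧
    (∀ c x t : ℝ, 0 < x → 0 < t →
      (∫ u in Set.Ioo (0:ℝ) t, (t - u) ^ (a - 2) * (1 + t - u) ^ (c - a - 1) *
          u ^ (a - 1) * (1 + u) ^ (c - a - 1) * (t - u * (2 * a - 1) / a))
        < (1 / a) * ∫ u in Set.Ioo (0:ℝ) t, (t - u) ^ (a - 1) * (1 + t - u) ^ (c - a - 1) *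
            u ^ (a - 1) * (1 + u) ^ (c - a - 1)) := by
  have ha0 : (0:ℝ) < a := by linarith
  constructor
  · intro y hy0 hy1
    have h1 : (0:ℝ) < 1 / a := by positivity
    have h2 : 1 + (1 - 2 * a) * y ^ 2 < 1 - y ^ 2 := by nlinarith [mul_pos hy0 hy0]
    exact mul_lt_mul_of_pos_left h2 h1
  · intro c x t hx ht
    set G : ℝ → ℝ := fun u => (t - u) ^ (a - 2) * (1 + t - u) ^ (c - a - 1) *
        u ^ (a - 1) * (1 + u) ^ (c - a - 1) * (t - u * (2 * a - 1) / a) with hGdef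
    set H : ℝ → ℝ := fun u => (t - u) ^ (a - 1) * (1 + t - u) ^ (c - a - 1) *
        u ^ (a - 1) * (1 + u) ^ (c - a - 1) with hHdef
    -- continuity pieces on Icc 0 t
    have hc1 : ContinuousOn (fun u : ℝ => u ^ (a - 1)) (Set.Icc 0 t) :=
      ContinuousOn.rpow_const (by fun_prop) (fun u _ => Or.inr (by linarith))
    have hc5 : ContinuousOn (fun u : ℝ => (t - u) ^ (a - 1)) (Set.Icc 0 t) :=
      ContinuousOn.rpow_const (by fun_prop : ContinuousOn (fun u : ℝ => t - u) (Set.Icc 0 t))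
        (fun u _ => Or.inr (by linarith))
    have hc2 : ContinuousOn (fun u : ℝ => (1 + t - u) ^ (c - a - 1)) (Set.Icc 0 t) :=
      ContinuousOn.rpow_const
        (by fun_prop : ContinuousOn (fun u : ℝ => 1 + t - u) (Set.Icc 0 t))
        (fun u hu => Or.inl (by rcases hu with ⟨_, h2⟩; intro h; nlinarith))
    have hc3 : ContinuousOn (fun u : ℝ => (1 + u) ^ (c - a - 1)) (Set.Icc 0 t) :=
      ContinuousOn.rpow_const
        (by fun_prop : ContinuousOn (fun u : ℝ => 1 + u) (Set.Icc 0 t))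
        (fun u hu => Or.inl (by rcases hu with ⟨h1, _⟩; intro h; nlinarith))
    have hc4 : ContinuousOn (fun u : ℝ => t - u * (2 * a - 1) / a) (Set.Icc 0 t) := by
      fun_prop
    -- singular pieces integrable on Icc 0 t
    have hsing : IntegrableOn (fun u => (t - u) ^ (a - 2)) (Set.Icc 0 t) volume := by
      have h0 : IntervalIntegrable (fun x : ℝ => x ^ (a - 2)) volume 0 t :=
        intervalIntegral.intervalIntegrable_rpow' (by linarith)
      have h1 := h0.comp_sub_left t
      simp only [sub_zero, sub_self] at h1
      rw [integrableOn_Icc_iff_integrableOn_Ioc]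
      exact (intervalIntegrable_iff_integrableOn_Ioc_of_le ht.le).mp h1.symm
    have hsing' : IntegrableOn (fun u : ℝ => u ^ (a - 2)) (Set.Icc 0 t) volume := by
      rw [integrableOn_Icc_iff_integrableOn_Ioc]
      exact (intervalIntegrable_iff_integrableOn_Ioc_of_le ht.le).mp
        (intervalIntegral.intervalIntegrable_rpow' (by linarith))
    -- integrability of G, H, reflected G on Icc 0 t
    have hG : IntegrableOn G (Set.Icc 0 t) volume := by
      have : IntegrableOn (fun u => (t - u) ^ (a - 2) *
          ((1 + t - u) ^ (c - a - 1) * (u ^ (a - 1) * ((1 + u) ^ (c - a - 1) *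
            (t - u * (2 * a - 1) / a))))) (Set.Icc 0 t) volume :=
        hsing.mul_continuousOn (hc2.mul (hc1.mul (hc3.mul hc4))) isCompact_Icc
      refine this.congr_fun (fun u _ => by simp only [hGdef]; ring) measurableSet_Icc
    have hGr : IntegrableOn (fun u => G (t - u)) (Set.Icc 0 t) volume := by
      have : IntegrableOn (fun u : ℝ => u ^ (a - 2) *
          ((1 + u) ^ (c - a - 1) * ((t - u) ^ (a - 1) * ((1 + t - u) ^ (c - a - 1) *
            (t - (t - u) * (2 * a - 1) / a))))) (Set.Icc 0 t) volume := by
        refine hsing'.mul_continuousOn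
          (hc3.mul (hc5.mul (hc2.mul ?_))) isCompact_Icc
        fun_prop
      refine this.congr_fun (fun u _ => ?_) measurableSet_Icc
      simp only [hGdef, sub_sub_cancel]
      ring_nf
    have hH : IntegrableOn H (Set.Icc 0 t) volume := by
      have : ContinuousOn H (Set.Icc 0 t) := ((hc5.mul hc2).mul hc1).mul hc3
      exact this.integrableOn_compact isCompact_Icc
    -- pass to Ioo
    have hGo : IntegrableOn G (Set.Ioo 0 t) volume := hG.mono_set Set.Ioo_subset_Icc_self
    have hGro : IntegrableOn (fun u => G (t - u)) (Set.Ioo 0 t) volume :=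
      hGr.mono_set Set.Ioo_subset_Icc_self
    have hHo : IntegrableOn H (Set.Ioo 0 t) volume := hH.mono_set Set.Ioo_subset_Icc_self
    -- reflection identity
    have hrefl : ∫ u in Set.Ioo (0:ℝ) t, G (t - u) = ∫ u in Set.Ioo (0:ℝ) t, G u := by
      rw [← integral_Ioc_eq_integral_Ioo, ← integral_Ioc_eq_integral_Ioo,
        ← intervalIntegral.integral_of_le ht.le, ← intervalIntegral.integral_of_le ht.le,
        intervalIntegral.integral_comp_sub_left G t]
      simp
    -- key pointwise identity
    have key : ∀ u ∈ Set.Ioo (0:ℝ) t,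
        2 * H u - (a * G u + a * G (t - u)) =
        ((t - u) ^ (a - 2) * u ^ (a - 2) * (1 + t - u) ^ (c - a - 1) *
          (1 + u) ^ (c - a - 1)) * ((a - 1) * (t - 2 * u) ^ 2) := by
      intro u hu
      obtain ⟨hu0, hut⟩ := hu
      have htu : 0 < t - u := by linarith
      have e1 : u ^ (a - 1) = u ^ (a - 2) * u := by
        rw [show a - 1 = (a - 2) + 1 by ring, Real.rpow_add_one hu0.ne']
      have e2 : (t - u) ^ (a - 1) = (t - u) ^ (a - 2) * (t - u) := by
        rw [show a - 1 = (a - 2) + 1 by ring, Real.rpow_add_one htu.ne']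
      simp only [hGdef, hHdef, sub_sub_cancel, e1, e2]
      field_simp
      ring
    -- the difference function and its positivity
    set D : ℝ → ℝ := fun u => 2 * H u - (a * G u + a * G (t - u)) with hDdef
    have hDnn : ∀ u ∈ Set.Ioo (0:ℝ) t, 0 ≤ D u := by
      intro u hu
      show (0:ℝ) ≤ 2 * H u - (a * G u + a * G (t - u))
      rw [key u hu]
      obtain ⟨hu0, hut⟩ := hu
      have htu : 0 < t - u := by linarith
      have h1tu : (0:ℝ) < 1 + t - u := by linarith
      have h1u : (0:ℝ) < 1 + u := by linarith
      have hK : 0 < (t - u) ^ (a - 2) * u ^ (a - 2) * (1 + t - u) ^ (c - a - 1) *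
          (1 + u) ^ (c - a - 1) :=
        mul_pos (mul_pos (mul_pos (Real.rpow_pos_of_pos htu _)
          (Real.rpow_pos_of_pos hu0 _)) (Real.rpow_pos_of_pos h1tu _))
          (Real.rpow_pos_of_pos h1u _)
      exact mul_nonneg hK.le (mul_nonneg (by linarith) (sq_nonneg _))
    have hDpos : ∀ u ∈ Set.Ioo (0:ℝ) t, u ≠ t / 2 → 0 < D u := by
      intro u hu hne
      show (0:ℝ) < 2 * H u - (a * G u + a * G (t - u))
      rw [key u hu]
      obtain ⟨hu0, hut⟩ := hu
      have htu : 0 < t - u := by linarith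
      have h1tu : (0:ℝ) < 1 + t - u := by linarith
      have h1u : (0:ℝ) < 1 + u := by linarith
      have hsq : 0 < (t - 2 * u) ^ 2 := by
        have : t - 2 * u ≠ 0 := fun h => hne (by linarith)
        positivity
      have hK : 0 < (t - u) ^ (a - 2) * u ^ (a - 2) * (1 + t - u) ^ (c - a - 1) *
          (1 + u) ^ (c - a - 1) :=
        mul_pos (mul_pos (mul_pos (Real.rpow_pos_of_pos htu _)
          (Real.rpow_pos_of_pos hu0 _)) (Real.rpow_pos_of_pos h1tu _))
          (Real.rpow_pos_of_pos h1u _)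
      exact mul_pos hK (mul_pos (by linarith) hsq)
    have hDint : IntegrableOn D (Set.Ioo 0 t) volume := by
      exact (hHo.const_mul 2).sub ((hGo.const_mul a).add (hGro.const_mul a))
    -- strict positivity of the integral of D
    have hintpos : 0 < ∫ u in Set.Ioo (0:ℝ) t, D u := by
      rw [setIntegral_pos_iff_support_of_nonneg_ae ?_ hDint]
      · refine lt_of_lt_of_le ?_ (measure_mono (?_ : Set.Ioo 0 t \ {t/2} ⊆ _))
        · rw [measure_diff_null (measure_singleton _), Real.volume_Ioo]
          simpa using ht
        · intro u hu
          exact ⟨fun h => (hDpos u hu.1 hu.2).ne' h, hu.1⟩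
      · rw [Filter.EventuallyLE, ae_restrict_iff' measurableSet_Ioo]
        exact Filter.Eventually.of_forall (fun u hu => hDnn u hu)
    -- compute the integral of D
    have hsplit : (∫ u in Set.Ioo (0:ℝ) t, D u) =
        2 * (∫ u in Set.Ioo (0:ℝ) t, H u) -
          (a * (∫ u in Set.Ioo (0:ℝ) t, G u) + a * (∫ u in Set.Ioo (0:ℝ) t, G (t - u))) := by
      have e1 : (∫ u in Set.Ioo (0:ℝ) t, D u)
          = (∫ u in Set.Ioo (0:ℝ) t, 2 * H u)
            - ∫ u in Set.Ioo (0:ℝ) t, (a * G u + a * G (t - u)) :=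
        integral_sub (hHo.const_mul 2) ((hGo.const_mul a).add (hGro.const_mul a))
      have e2 : (∫ u in Set.Ioo (0:ℝ) t, (a * G u + a * G (t - u)))
          = (∫ u in Set.Ioo (0:ℝ) t, a * G u) + ∫ u in Set.Ioo (0:ℝ) t, a * G (t - u) :=
        integral_add (hGo.const_mul a) (hGro.const_mul a)
      rw [e1, e2, integral_const_mul, integral_const_mul, integral_const_mul]
    rw [hsplit, hrefl] at hintpos
    set IG := ∫ u in Set.Ioo (0:ℝ) t, G u
    set IH := ∫ u in Set.Ioo (0:ℝ) t, H u
    have h1a : (0:ℝ) < 1 / a := by positivity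
    have hfin : IG < IH / a := (lt_div_iff₀ ha0).mpr (by linarith)
    have hrq : (1:ℝ) / a * IH = IH / a := by ring
    rw [hrq]
    exact hfin
end
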